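/- arXiv:1804.06617 — 5 statements merged into one kernel-verified Lean document; each statement's English description precedes it below -/
import Mathlib

section
/- If A is a bijective skew PBW extension over R with generators x_1,…,x_n, endomorphisms σ_i and derivations δ_i, then the opposite ring A^{op} is a bijective skew PBW extension over R^{op} with the same generators, with automorphisms σ_i^{op} : R^{op} → R^{op} given by σ_i^{op}(r) = σ_i^{-1}(r) and σ_i^{op}-derivations δ_i^{op} : R^{op} → R^{op} given by δ_i^{op}(r) = −δ_i(σ_i^{-1}(r)). -/
open scoped TensorProduct
open MulOpposite

noncomputable section

/-- The standard monomial `x₁^{α₁} ⋯ xₙ^{αₙ}` (ordered product). -/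
def spbwMon {A : Type*} [Ring A] {n : ℕ} (x : Fin n → A) (α : Fin n → ℕ) : A :=
  (List.ofFn fun i => x i ^ α i).prod

/-- The set `R + R x₁ + ⋯ + R xₙ` inside `A`. -/
def spbwSpan {R A : Type*} [Ring R] [Ring A] {n : ℕ} (ι : R →+* A) (x : Fin n → A) :
    Set A :=
  {a : A | ∃ (r₀ : R) (c : Fin n → R), a = ι r₀ + ∑ l, ι (c l) * x l}

/-- `A` is a skew PBW extension over `R` (embedded in `A` via `ι`) with
generators `x₁, …, xₙ`. -/
structure IsSkewPBWExtension {R A : Type*} [Ring R] [Ring A] {n : ℕ}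
    (ι : R →+* A) (x : Fin n → A) : Prop where
  /-- (i) `R ⊆ A`. -/
  inj : Function.Injective ι
  /-- (ii) `A` is a free left `R`-module with basis the standard monomials. -/
  repr_unique : ∀ f : A, ∃! c : (Fin n → ℕ) →₀ R,
    f = c.sum fun α r => ι r * spbwMon x α
  /-- (iii) `xᵢ r − c_{i,r} xᵢ ∈ R`. -/
  mul_coeff : ∀ (i : Fin n) (r : R), r ≠ 0 → ∃ c : R, c ≠ 0 ∧
    x i * ι r - ι c * x i ∈ Set.range ι
  /-- (iv) `xⱼ xᵢ − c_{i,j} xᵢ xⱼ ∈ R + R x₁ + ⋯ + R xₙ`. -/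
  mul_gen : ∀ i j : Fin n, ∃ c : R, c ≠ 0 ∧
    x j * x i - ι c * (x i * x j) ∈ spbwSpan ι x

/-- `δ` is a `σ`-derivation: additive and `δ(rs) = σ(r)δ(s) + δ(r)s`. -/
def IsSigmaDerivation {R : Type*} [Ring R] (σ : R → R) (δ : R → R) : Prop :=
  (∀ r s : R, δ (r + s) = δ r + δ s) ∧ ∀ r s : R, δ (r * s) = σ r * δ s + δ r * s

namespace SPBWAux


theorem rev_ofFn {α : Type*} {n : ℕ} (f : Fin n → α) :
    (List.ofFn f).reverse = List.ofFn (fun i => f i.rev) := by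
  induction n with
  | zero => simp
  | succ m ih =>
    rw [List.ofFn_succ', List.concat_eq_append, List.reverse_append, List.reverse_singleton,
      List.ofFn_succ (f := fun i : Fin (m+1) => f i.rev)]
    simp only [List.singleton_append, ih]
    have h1 : f (Fin.last m) = f (Fin.rev 0) := by rw [Fin.rev_zero]
    have h2 : (List.ofFn fun j : Fin m => f j.rev.castSucc) =
        List.ofFn fun i : Fin m => f i.succ.rev := by
      apply congrArg List.ofFn
      funext j
      congr 1
      ext
      simp only [Fin.rev, Fin.coe_castSucc, Fin.val_succ]
      omega
    rw [h1, h2]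

theorem ofFn_prod_one {M : Type*} [Monoid M] {n : ℕ} (f : Fin n → M) (h : ∀ i, f i = 1) :
    (List.ofFn f).prod = 1 := by
  apply List.prod_eq_one
  intro a ha
  rw [List.mem_ofFn] at ha
  obtain ⟨i, rfl⟩ := ha
  exact h i

theorem peel {M : Type*} [Monoid M] {n : ℕ} (f : Fin n → M) (j : Fin n)
    (h : ∀ k, k < j → f k = 1) :
    (List.ofFn f).prod = f j * (List.ofFn (Function.update f j 1)).prod := by
  induction n with
  | zero => exact absurd j.2 (by omega)
  | succ m ih =>
    rcases Fin.eq_zero_or_eq_succ j with rfl | ⟨j', rfl⟩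
    · have htail : (List.ofFn (Function.update f 0 1)) =
          1 :: List.ofFn fun i : Fin m => f i.succ := by
        rw [List.ofFn_succ]
        rw [Function.update_self]
        congr 1
      rw [List.ofFn_succ, List.prod_cons, htail, List.prod_cons, one_mul]
    · have hf0 : f 0 = 1 := h 0 (Fin.succ_pos j')
      have htail : (List.ofFn (Function.update f j'.succ 1)) =
          1 :: List.ofFn (Function.update (fun i : Fin m => f i.succ) j' 1) := by
        rw [List.ofFn_succ, Function.update_of_ne (Fin.succ_ne_zero j').symm, hf0]
        congr 1
        apply congrArg List.ofFn
        funext i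
        by_cases hi : i = j'
        · subst hi; simp
        · rw [Function.update_of_ne hi,
            Function.update_of_ne (fun hh => hi (Fin.succ_injective _ hh))]
      rw [List.ofFn_succ, List.prod_cons, hf0, one_mul,
        ih (fun i => f i.succ) j' (fun k hk => h k.succ (by simpa using hk)),
        htail, List.prod_cons, one_mul]

theorem peel_rev {M : Type*} [Monoid M] {n : ℕ} (f : Fin n → M) (j : Fin n)
    (h : ∀ k, j < k → f k = 1) :
    (List.ofFn f).reverse.prod = f j * (List.ofFn (Function.update f j 1)).reverse.prod := by
  rw [rev_ofFn, rev_ofFn]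
  have := peel (fun i => f i.rev) j.rev (fun k hk => h k.rev (by
    rwa [← Fin.rev_lt_rev, Fin.rev_rev] at hk))
  rw [this]
  simp only [Fin.rev_rev]
  congr 2
  apply congrArg List.ofFn
  funext i
  by_cases hi : i = j.rev
  · subst hi; rw [Function.update_self, Fin.rev_rev, Function.update_self]
  · rw [Function.update_of_ne hi, Function.update_of_ne]
    intro hh
    exact hi (by rw [← hh, Fin.rev_rev])


variable {M : Type*} [Monoid M] {n : ℕ}

theorem pow_update_eq (b : Fin n → M) (α : Fin n → ℕ) (j : Fin n) :
    Function.update (fun i => b i ^ α i) j 1 = fun i => b i ^ (Function.update α j 0 i) := by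
  funext i
  by_cases hi : i = j
  · subst hi; simp
  · rw [Function.update_of_ne hi, Function.update_of_ne hi]

theorem update_pre {α : Fin n → ℕ} {j : Fin n} (v : ℕ) (hpre : ∀ k, k < j → α k = 0) :
    ∀ k, k < j → Function.update α j v k = 0 := by
  intro k hk
  rw [Function.update_of_ne (ne_of_lt hk), hpre k hk]

theorem update_suf {α : Fin n → ℕ} {j : Fin n} (v : ℕ) (hsuf : ∀ k, j < k → α k = 0) :
    ∀ k, j < k → Function.update α j v k = 0 := by
  intro k hk
  rw [Function.update_of_ne (ne_of_gt hk), hsuf k hk]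

theorem pow_split (b : Fin n → M) (α : Fin n → ℕ) (j : Fin n) (hpre : ∀ k, k < j → α k = 0) :
    (List.ofFn fun i => b i ^ α i).prod
      = b j ^ α j * (List.ofFn fun i => b i ^ (Function.update α j 0 i)).prod := by
  have := peel (fun i => b i ^ α i) j (fun k hk => by show b k ^ α k = 1; rw [hpre k hk, pow_zero])
  rwa [pow_update_eq] at this

theorem pow_split_rev (b : Fin n → M) (α : Fin n → ℕ) (j : Fin n) (hsuf : ∀ k, j < k → α k = 0) :
    (List.ofFn fun i => b i ^ α i).reverse.prod
      = b j ^ α j * (List.ofFn fun i => b i ^ (Function.update α j 0 i)).reverse.prod := by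
  have := peel_rev (fun i => b i ^ α i) j (fun k hk => by show b k ^ α k = 1; rw [hsuf k hk, pow_zero])
  rwa [pow_update_eq] at this

theorem pow_cons (b : Fin n → M) (α : Fin n → ℕ) (j : Fin n) (hpre : ∀ k, k < j → α k = 0) :
    b j * (List.ofFn fun i => b i ^ α i).prod
      = (List.ofFn fun i => b i ^ (Function.update α j (α j + 1) i)).prod := by
  rw [pow_split b α j hpre,
    pow_split b (Function.update α j (α j + 1)) j (update_pre _ hpre),
    ← mul_assoc, Function.update_self, ← pow_succ', Function.update_idem]

theorem pow_cons_rev (b : Fin n → M) (α : Fin n → ℕ) (j : Fin n) (hsuf : ∀ k, j < k → α k = 0) :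
    b j * (List.ofFn fun i => b i ^ α i).reverse.prod
      = (List.ofFn fun i => b i ^ (Function.update α j (α j + 1) i)).reverse.prod := by
  rw [pow_split_rev b α j hsuf,
    pow_split_rev b (Function.update α j (α j + 1)) j (update_suf _ hsuf),
    ← mul_assoc, Function.update_self, ← pow_succ', Function.update_idem]

theorem update_pred_eq {α : Fin n → ℕ} {j : Fin n} (hj : α j ≠ 0) :
    Function.update (Function.update α j (α j - 1)) j (Function.update α j (α j - 1) j + 1) = α := by
  rw [Function.update_self, Function.update_idem, Nat.sub_add_cancel (Nat.one_le_iff_ne_zero.mpr hj),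
    Function.update_eq_self]

theorem pow_peel (b : Fin n → M) (α : Fin n → ℕ) (j : Fin n) (hpre : ∀ k, k < j → α k = 0)
    (hj : α j ≠ 0) :
    (List.ofFn fun i => b i ^ α i).prod
      = b j * (List.ofFn fun i => b i ^ (Function.update α j (α j - 1) i)).prod := by
  have := pow_cons b (Function.update α j (α j - 1)) j (update_pre _ hpre)
  rw [update_pred_eq hj] at this
  exact this.symm

theorem pow_peel_rev (b : Fin n → M) (α : Fin n → ℕ) (j : Fin n) (hsuf : ∀ k, j < k → α k = 0)
    (hj : α j ≠ 0) :
    (List.ofFn fun i => b i ^ α i).reverse.prod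
      = b j * (List.ofFn fun i => b i ^ (Function.update α j (α j - 1) i)).reverse.prod := by
  have := pow_cons_rev b (Function.update α j (α j - 1)) j (update_suf _ hsuf)
  rw [update_pred_eq hj] at this
  exact this.symm

theorem sum_update (α : Fin n → ℕ) (j : Fin n) (v : ℕ) :
    ∑ i, Function.update α j v i = v + ∑ i ∈ Finset.univ.erase j, α i := by
  rw [Finset.sum_update_of_mem (Finset.mem_univ j), ← Finset.erase_eq]

theorem sum_eq (α : Fin n → ℕ) (j : Fin n) :
    ∑ i, α i = α j + ∑ i ∈ Finset.univ.erase j, α i :=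
  (Finset.add_sum_erase _ _ (Finset.mem_univ j)).symm

theorem deg_update_succ (α : Fin n → ℕ) (j : Fin n) :
    ∑ i, Function.update α j (α j + 1) i = (∑ i, α i) + 1 := by
  rw [sum_update, sum_eq α j]; omega

theorem deg_update_pred (α : Fin n → ℕ) (j : Fin n) (hj : α j ≠ 0) :
    (∑ i, Function.update α j (α j - 1) i) + 1 = ∑ i, α i := by
  rw [sum_update, sum_eq α j]; omega


section Main
variable {R A : Type*} [Ring R] [Ring A] {n : ℕ}

/-- total degree -/
def deg (α : Fin n → ℕ) : ℕ := ∑ i, α i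

/-- reversed monomial -/
def monRev (x : Fin n → A) (α : Fin n → ℕ) : A := (List.ofFn fun i => x i ^ α i).reverse.prod

/-- filtration: left span of monomials of degree < d -/
def Gf (ι : R →+* A) (x : Fin n → A) (d : ℕ) : AddSubgroup A :=
  AddSubgroup.closure {a | ∃ r α, deg α < d ∧ a = ι r * spbwMon x α}

variable (ι : R →+* A) (x : Fin n → A)

theorem least_nonzero {α : Fin n → ℕ} (hex : ∃ j, α j ≠ 0) :
    ∃ j, α j ≠ 0 ∧ ∀ k, k < j → α k = 0 := by
  classical
  set S := Finset.univ.filter (fun k => α k ≠ 0) with hS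
  obtain ⟨j0, hj0⟩ := hex
  have hSne : S.Nonempty := ⟨j0, by simp [hS, hj0]⟩
  refine ⟨S.min' hSne, ?_, ?_⟩
  · have := S.min'_mem hSne
    simp [hS] at this
    exact this
  · intro k hk
    by_contra h'
    exact absurd (S.min'_le k (by simp [hS, h'])) (not_le.mpr hk)

theorem greatest_nonzero {α : Fin n → ℕ} (hex : ∃ j, α j ≠ 0) :
    ∃ j, α j ≠ 0 ∧ ∀ k, j < k → α k = 0 := by
  classical
  set S := Finset.univ.filter (fun k => α k ≠ 0) with hS
  obtain ⟨j0, hj0⟩ := hex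
  have hSne : S.Nonempty := ⟨j0, by simp [hS, hj0]⟩
  refine ⟨S.max' hSne, ?_, ?_⟩
  · have := S.max'_mem hSne
    simp [hS] at this
    exact this
  · intro k hk
    by_contra h'
    exact absurd (S.le_max' k (by simp [hS, h'])) (not_le.mpr hk)

theorem Gf_mono {d e : ℕ} (hde : d ≤ e) : Gf ι x d ≤ Gf ι x e :=
  AddSubgroup.closure_mono (fun a ⟨r, α, hα, ha⟩ => ⟨r, α, lt_of_lt_of_le hα hde, ha⟩)

theorem mem_Gf {d : ℕ} (r : R) (α : Fin n → ℕ) (hα : deg α < d) :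
    ι r * spbwMon x α ∈ Gf ι x d :=
  AddSubgroup.subset_closure ⟨r, α, hα, rfl⟩

theorem mon_mem_Gf {d : ℕ} (α : Fin n → ℕ) (hα : deg α < d) : spbwMon x α ∈ Gf ι x d := by
  have := mem_Gf ι x 1 α hα
  rwa [map_one, one_mul] at this

theorem Gf_iota_mul {d : ℕ} (r : R) {a : A} (ha : a ∈ Gf ι x d) : ι r * a ∈ Gf ι x d := by
  refine AddSubgroup.closure_induction ?_ ?_ ?_ ?_ ha
  · rintro b ⟨s, α, hα, rfl⟩
    rw [← mul_assoc, ← map_mul]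
    exact mem_Gf _ _ _ _ hα
  · rw [mul_zero]; exact zero_mem _
  · intro b c _ _ hb hc; rw [mul_add]; exact add_mem hb hc
  · intro b _ hb; rw [mul_neg]; exact neg_mem hb

theorem spbwMon_zero : spbwMon x (fun _ => 0) = 1 :=
  ofFn_prod_one _ (fun i => pow_zero (x i))

section Rel
variable (σ : Fin n → R ≃+* R) (δ : Fin n → R → R)
  (hrel : ∀ (i : Fin n) (r : R), x i * ι r = ι (σ i r) * x i + ι (δ i r))
  (c : Fin n → Fin n → R)
  (hc : ∀ i j : Fin n, x j * x i - ι (c i j) * (x i * x j) ∈ spbwSpan ι x)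

include hrel hc in
theorem W3aux : ∀ k d (i : Fin n) (α : Fin n → ℕ), d * n + i.val ≤ k → deg α ≤ d →
    x i * spbwMon x α ∈ Gf ι x (d + 2) := by
  intro k
  induction k using Nat.strong_induction_on with
  | _ k IH =>
  intro d i α hk hα
  have hn : 0 < n := i.pos
  by_cases hex : ∃ j : Fin n, j < i ∧ α j ≠ 0
  · -- bad prefix: commute
    obtain ⟨j, hjne, hpre0⟩ := least_nonzero (α := α) ⟨hex.choose, hex.choose_spec.2⟩
    have hji : j < i := by
      by_contra h'
      exact hex.choose_spec.2 (hpre0 _ (lt_of_lt_of_le hex.choose_spec.1 (not_lt.mp h')))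
    set α' := Function.update α j (α j - 1) with hα'def
    have hmon : spbwMon x α = x j * spbwMon x α' := pow_peel x α j hpre0 hjne
    have hdeg' : deg α' + 1 = deg α := deg_update_pred α j hjne
    obtain ⟨d', rfl⟩ : ∃ d', d = d' + 1 := ⟨d - 1, by omega⟩
    have hα'le : deg α' ≤ d' := by omega
    have hmul : (d' + 1) * n = d' * n + n := Nat.succ_mul d' n
    have ht : x i * spbwMon x α' ∈ Gf ι x (d' + 2) :=
      IH (d' * n + i.val) (by omega) d' i α' le_rfl hα'le
    obtain ⟨r0, cl, hs⟩ := hc j i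
    set s := x i * x j - ι (c j i) * (x j * x i) with hsdef
    have key : x i * spbwMon x α =
        ι (c j i) * (x j * (x i * spbwMon x α')) + s * spbwMon x α' := by
      rw [hmon, ← mul_assoc]
      have : x i * x j = ι (c j i) * (x j * x i) + s := by rw [hsdef]; noncomm_ring
      rw [this, add_mul]
      congr 1
      rw [mul_assoc, mul_assoc]
    rw [key]
    apply add_mem
    · apply Gf_iota_mul
      -- x j * (element of Gf (d'+2)) ∈ Gf (d'+3)
      refine AddSubgroup.closure_induction ?_ ?_ ?_ ?_ ht
      · rintro b ⟨rb, β, hβ, rfl⟩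
        have hexp : x j * (ι rb * spbwMon x β) =
            ι (σ j rb) * (x j * spbwMon x β) + ι (δ j rb) * spbwMon x β := by
          rw [← mul_assoc, hrel j rb, add_mul, mul_assoc]
        rw [hexp]
        apply add_mem
        · apply Gf_iota_mul
          exact IH ((d' + 1) * n + j.val) (by omega) (d' + 1) j β le_rfl (by omega)
        · exact mem_Gf _ _ _ _ (by omega)
      · rw [mul_zero]; exact zero_mem _
      · intro b b' _ _ hb hb'; rw [mul_add]; exact add_mem hb hb'
      · intro b _ hb; rw [mul_neg]; exact neg_mem hb
    · -- s * mon α'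
      rw [hs, add_mul, Finset.sum_mul]
      apply add_mem
      · exact mem_Gf _ _ _ _ (by omega)
      · apply sum_mem
        intro l _
        rw [mul_assoc]
        apply Gf_iota_mul
        have := IH (d' * n + l.val) (by omega) d' l α' le_rfl hα'le
        exact Gf_mono ι x (by omega) this
  · -- good prefix: absorb
    have hpre : ∀ k', k' < i → α k' = 0 := by
      intro k' hk'
      by_contra h'
      exact hex ⟨k', hk', h'⟩
    have habs : x i * spbwMon x α = spbwMon x (Function.update α i (α i + 1)) :=
      pow_cons x α i hpre
    rw [habs]
    apply mon_mem_Gf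
    have h1 : ∑ i', Function.update α i (α i + 1) i' = (∑ i', α i') + 1 := deg_update_succ α i
    have h2 : ∑ i', α i' ≤ d := hα
    show (∑ i', Function.update α i (α i + 1) i') < d + 2
    omega


include hrel hc in
theorem Gf_x_mul {e : ℕ} (i : Fin n) {a : A} (ha : a ∈ Gf ι x e) :
    x i * a ∈ Gf ι x (e + 1) := by
  refine AddSubgroup.closure_induction ?_ ?_ ?_ ?_ ha
  · rintro b ⟨rb, β, hβ, rfl⟩
    have hexp : x i * (ι rb * spbwMon x β) =
        ι (σ i rb) * (x i * spbwMon x β) + ι (δ i rb) * spbwMon x β := by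
      rw [← mul_assoc, hrel i rb, add_mul, mul_assoc]
    rw [hexp]
    apply add_mem
    · apply Gf_iota_mul
      have := W3aux ι x σ δ hrel c hc (deg β * n + i.val) (deg β) i β le_rfl le_rfl
      exact Gf_mono ι x (by omega) this
    · exact mem_Gf _ _ _ _ (by omega)
  · rw [mul_zero]; exact zero_mem _
  · intro b b' _ _ hb hb'; rw [mul_add]; exact add_mem hb hb'
  · intro b _ hb; rw [mul_neg]; exact neg_mem hb

include hrel hc in
theorem span_mul_mem {s : A} (hs : s ∈ spbwSpan ι x) {β : Fin n → ℕ} {d : ℕ}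
    (hβ : deg β ≤ d) : s * spbwMon x β ∈ Gf ι x (d + 2) := by
  obtain ⟨r0, cl, rfl⟩ := hs
  rw [add_mul, Finset.sum_mul]
  apply add_mem
  · exact mem_Gf _ _ _ _ (by omega)
  · apply sum_mem
    intro l _
    rw [mul_assoc]
    apply Gf_iota_mul
    exact W3aux ι x σ δ hrel c hc (d * n + l.val) d l β le_rfl hβ

end Rel

def SigF (σ : Fin n → R ≃+* R) (α : Fin n → ℕ) : R ≃+* R :=
  ((List.ofFn fun i => (σ i : RingAut R) ^ α i).prod : RingAut R)

theorem SigF_peel (σ : Fin n → R ≃+* R) {α : Fin n → ℕ} (j : Fin n)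
    (hpre : ∀ k, k < j → α k = 0) (hj : α j ≠ 0) (r : R) :
    SigF σ α r = σ j (SigF σ (Function.update α j (α j - 1)) r) := by
  have h := pow_peel (M := RingAut R) (fun i => σ i) α j hpre hj
  show (((List.ofFn fun i => (σ i : RingAut R) ^ α i).prod : RingAut R)) r = _
  rw [h]
  rfl

section Rel
variable (σ : Fin n → R ≃+* R) (δ : Fin n → R → R)
  (hrel : ∀ (i : Fin n) (r : R), x i * ι r = ι (σ i r) * x i + ι (δ i r))
  (c : Fin n → Fin n → R)
  (hc : ∀ i j : Fin n, x j * x i - ι (c i j) * (x i * x j) ∈ spbwSpan ι x)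

include hrel hc in
theorem P1 : ∀ d (α : Fin n → ℕ) (r : R), deg α ≤ d →
    spbwMon x α * ι r - ι (SigF σ α r) * spbwMon x α ∈ Gf ι x d := by
  intro d
  induction d using Nat.strong_induction_on with
  | _ d IH =>
  intro α r hα
  by_cases hex : ∃ j, α j ≠ 0
  · obtain ⟨j, hjne, hpre⟩ := least_nonzero hex
    set α' := Function.update α j (α j - 1) with hα'def
    have hmon : spbwMon x α = x j * spbwMon x α' := pow_peel x α j hpre hjne
    have hdeg' : deg α' + 1 = deg α := deg_update_pred α j hjne
    obtain ⟨d'', rfl⟩ : ∃ d'', d = d'' + 1 := ⟨d - 1, by omega⟩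
    have hIH := IH d'' (by omega) α' r (by omega)
    set s' := SigF σ α' r with hs'def
    set g := spbwMon x α' * ι r - ι s' * spbwMon x α' with hgdef
    have hrep : spbwMon x α' * ι r = ι s' * spbwMon x α' + g := by
      rw [hgdef]; noncomm_ring
    have hSig : SigF σ α r = σ j s' := SigF_peel σ j hpre hjne r
    have hfinal : spbwMon x α * ι r = ι (SigF σ α r) * spbwMon x α +
        (ι (δ j s') * spbwMon x α' + x j * g) := by
      rw [hSig, hmon, mul_assoc, hrep, mul_add, ← mul_assoc, hrel j s', add_mul, mul_assoc]
      abel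
    rw [hfinal, add_sub_cancel_left]
    apply add_mem
    · exact mem_Gf _ _ _ _ (by omega)
    · exact Gf_x_mul ι x σ δ hrel c hc j hIH
  · push_neg at hex
    have h2 : spbwMon x α = 1 := ofFn_prod_one _ (fun i => by rw [hex i, pow_zero])
    have hs : SigF σ α r = r := by
      have h1 : SigF σ α = 1 := ofFn_prod_one _ (fun i => by
        show (σ i : RingAut R) ^ α i = 1
        rw [hex i, pow_zero])
      rw [h1]; rfl
    rw [h2, hs, one_mul, mul_one, sub_self]
    exact zero_mem _

include hrel hc in
theorem Gf_mul_iota {e : ℕ} (r : R) {a : A} (ha : a ∈ Gf ι x e) : a * ι r ∈ Gf ι x e := by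
  refine AddSubgroup.closure_induction ?_ ?_ ?_ ?_ ha
  · rintro b ⟨rb, β, hβ, rfl⟩
    have h1 := P1 ι x σ δ hrel c hc (deg β) β r le_rfl
    set g := spbwMon x β * ι r - ι (SigF σ β r) * spbwMon x β with hgdef
    have hthis : (ι rb * spbwMon x β) * ι r =
        ι (rb * SigF σ β r) * spbwMon x β + ι rb * g := by
      rw [hgdef, map_mul, mul_assoc]; noncomm_ring
    rw [hthis]
    exact add_mem (mem_Gf _ _ _ _ hβ) (Gf_mono ι x (by omega) (Gf_iota_mul ι x rb h1))
  · rw [zero_mul]; exact zero_mem _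
  · intro b b' _ _ hb hb'; rw [add_mul]; exact add_mem hb hb'
  · intro b _ hb; rw [neg_mul]; exact neg_mem hb

variable (hcu : ∀ i j : Fin n, i < j → IsUnit (c i j))

include hrel hc hcu in
theorem SL : ∀ d (β : Fin n → ℕ) (j : Fin n), deg β ≤ d → (∀ k, j < k → β k = 0) →
    ∃ v, IsUnit v ∧
      x j * spbwMon x β - ι v * spbwMon x (Function.update β j (β j + 1)) ∈
        Gf ι x (d + 1) := by
  intro d
  induction d using Nat.strong_induction_on with
  | _ d IH =>
  intro β j hβ hsuf
  by_cases hex : ∃ i0, i0 < j ∧ β i0 ≠ 0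
  · obtain ⟨i, hine, hpre⟩ := least_nonzero (α := β) ⟨hex.choose, hex.choose_spec.2⟩
    have hij : i < j := by
      by_contra h'
      exact hex.choose_spec.2 (hpre _ (lt_of_lt_of_le hex.choose_spec.1 (not_lt.mp h')))
    set β' := Function.update β i (β i - 1) with hβ'def
    have hmon : spbwMon x β = x i * spbwMon x β' := pow_peel x β i hpre hine
    have hdeg' : deg β' + 1 = deg β := deg_update_pred β i hine
    obtain ⟨d'', rfl⟩ : ∃ d'', d = d'' + 1 := ⟨d - 1, by omega⟩
    have hsuf' : ∀ k, j < k → β' k = 0 := fun k hk => by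
      rw [hβ'def, Function.update_of_ne (Fin.ne_of_gt (lt_trans hij hk))]
      exact hsuf k hk
    obtain ⟨v', hv'u, hg'⟩ := IH d'' (by omega) β' j (by omega) hsuf'
    set γ := Function.update β' j (β' j + 1) with hγdef
    set g' := x j * spbwMon x β' - ι v' * spbwMon x γ with hg'def
    have hrep : x j * spbwMon x β' = ι v' * spbwMon x γ + g' := by
      rw [hg'def]; noncomm_ring
    have hciju : IsUnit (c i j) := hcu i j hij
    have hsmem := hc i j
    set s := x j * x i - ι (c i j) * (x i * x j) with hsdef
    have hs' : x j * x i = ι (c i j) * (x i * x j) + s := by rw [hsdef]; noncomm_ring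
    have hγpre : ∀ k, k < i → γ k = 0 := fun k hk => by
      rw [hγdef, Function.update_of_ne (Fin.ne_of_lt (lt_trans hk hij)),
        hβ'def, Function.update_of_ne (Fin.ne_of_lt hk)]
      exact hpre k hk
    have hγi : γ i = β i - 1 := by
      rw [hγdef, Function.update_of_ne (Fin.ne_of_lt hij), hβ'def, Function.update_self]
    have hkey2 : x i * spbwMon x γ = spbwMon x (Function.update β j (β j + 1)) := by
      have h1 : x i * spbwMon x γ = spbwMon x (Function.update γ i (γ i + 1)) :=
        pow_cons x γ i hγpre
      rw [h1]
      congr 1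
      funext k
      by_cases hk1 : k = i
      · subst hk1
        rw [Function.update_self, Function.update_of_ne (Fin.ne_of_lt hij), hγi]
        omega
      · by_cases hk2 : k = j
        · subst hk2
          rw [Function.update_of_ne hk1, hγdef, Function.update_self, hβ'def,
            Function.update_of_ne hk1, Function.update_self]
        · rw [Function.update_of_ne hk1, hγdef, Function.update_of_ne hk2, hβ'def,
            Function.update_of_ne hk1, Function.update_of_ne hk2]
    have hfinal : x j * spbwMon x β =
        ι (c i j * σ i v') * spbwMon x (Function.update β j (β j + 1)) +
        (ι (c i j * δ i v') * spbwMon x γ + ι (c i j) * (x i * g') + s * spbwMon x β') := by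
      rw [hmon, ← mul_assoc, hs', add_mul, mul_assoc (ι (c i j)), mul_assoc (x i), hrep,
        mul_add, ← mul_assoc (x i) (ι v'), hrel i v', add_mul, mul_assoc (ι (σ i v')), hkey2,
        map_mul, map_mul]
      noncomm_ring
    refine ⟨c i j * σ i v', hciju.mul (hv'u.map (σ i)), ?_⟩
    rw [hfinal, add_sub_cancel_left]
    refine add_mem (add_mem ?_ ?_) ?_
    · have h3 : deg γ = deg β' + 1 := deg_update_succ β' j
      exact mem_Gf _ _ _ _ (by omega)
    · exact Gf_iota_mul ι x (c i j) (Gf_x_mul ι x σ δ hrel c hc i hg')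
    · exact span_mul_mem ι x σ δ hrel c hc hsmem (by omega)
  · have hpre : ∀ k, k < j → β k = 0 := fun k hk => by
      by_contra h'
      exact hex ⟨k, hk, h'⟩
    refine ⟨1, isUnit_one, ?_⟩
    have hcons : x j * spbwMon x β = spbwMon x (Function.update β j (β j + 1)) :=
      pow_cons x β j hpre
    rw [map_one, one_mul, hcons, sub_self]
    exact zero_mem _


include hrel hc hcu in
theorem P2 : ∀ d (α : Fin n → ℕ), deg α ≤ d →
    ∃ u, IsUnit u ∧ monRev x α - ι u * spbwMon x α ∈ Gf ι x d := by
  intro d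
  induction d using Nat.strong_induction_on with
  | _ d IH =>
  intro α hα
  by_cases hex : ∃ j, α j ≠ 0
  · obtain ⟨j, hjne, hsuf⟩ := greatest_nonzero hex
    set α' := Function.update α j (α j - 1) with hα'def
    have hmonR : monRev x α = x j * monRev x α' := pow_peel_rev x α j hsuf hjne
    have hdeg' : deg α' + 1 = deg α := deg_update_pred α j hjne
    obtain ⟨d'', rfl⟩ : ∃ d'', d = d'' + 1 := ⟨d - 1, by omega⟩
    obtain ⟨u', hu', hg⟩ := IH d'' (by omega) α' (by omega)
    set g := monRev x α' - ι u' * spbwMon x α' with hgdef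
    have hrep : monRev x α' = ι u' * spbwMon x α' + g := by rw [hgdef]; noncomm_ring
    have hsuf' : ∀ k, j < k → α' k = 0 := fun k hk => by
      rw [hα'def, Function.update_of_ne (Fin.ne_of_gt hk)]
      exact hsuf k hk
    obtain ⟨v, hv, hSL⟩ := SL ι x σ δ hrel c hc hcu d'' α' j (by omega) hsuf'
    set τ := Function.update α' j (α' j + 1) with hτdef
    have hτ : τ = α := by rw [hτdef, hα'def]; exact update_pred_eq hjne
    set g2 := x j * spbwMon x α' - ι v * spbwMon x τ with hg2def
    have hrep2 : x j * spbwMon x α' = ι v * spbwMon x τ + g2 := by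
      rw [hg2def]; noncomm_ring
    refine ⟨σ j u' * v, (hu'.map (σ j)).mul hv, ?_⟩
    have hfinal : monRev x α = ι (σ j u' * v) * spbwMon x τ +
        (ι (δ j u') * spbwMon x α' + ι (σ j u') * g2 + x j * g) := by
      rw [hmonR, hrep, mul_add, ← mul_assoc, hrel j u', add_mul, mul_assoc, hrep2, map_mul]
      noncomm_ring
    rw [hτ] at hfinal
    rw [hfinal, add_sub_cancel_left]
    refine add_mem (add_mem ?_ ?_) ?_
    · exact mem_Gf _ _ _ _ (by omega)
    · exact Gf_iota_mul ι x _ hSL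
    · exact Gf_x_mul ι x σ δ hrel c hc j hg
  · push_neg at hex
    refine ⟨1, isUnit_one, ?_⟩
    have h1 : monRev x α = 1 := by
      apply List.prod_eq_one
      intro a ha
      rw [List.mem_reverse, List.mem_ofFn] at ha
      obtain ⟨i, rfl⟩ := ha
      show x i ^ α i = 1
      rw [hex i, pow_zero]
    have h2 : spbwMon x α = 1 := ofFn_prod_one _ (fun i => by rw [hex i, pow_zero])
    rw [h1, h2, map_one, one_mul, sub_self]
    exact zero_mem _

end Rel

section Coeff
variable (h : IsSkewPBWExtension ι x)

/-- the coordinate function coming from the left PBW basis -/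
def coeffF (f : A) : (Fin n → ℕ) →₀ R := (h.repr_unique f).choose

theorem coeff_spec (f : A) : f = (coeffF ι x h f).sum fun α r => ι r * spbwMon x α :=
  (h.repr_unique f).choose_spec.1

theorem coeff_unique {f : A} {cc : (Fin n → ℕ) →₀ R}
    (hcc : f = cc.sum fun α r => ι r * spbwMon x α) : cc = coeffF ι x h f :=
  (h.repr_unique f).choose_spec.2 cc hcc

theorem coeff_single (r : R) (α : Fin n → ℕ) :
    coeffF ι x h (ι r * spbwMon x α) = Finsupp.single α r := by
  refine (coeff_unique ι x h ?_).symm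
  rw [Finsupp.sum_single_index (by rw [map_zero, zero_mul])]

theorem coeff_add (f g : A) :
    coeffF ι x h (f + g) = coeffF ι x h f + coeffF ι x h g := by
  refine (coeff_unique ι x h ?_).symm
  rw [Finsupp.sum_add_index' (fun α => by rw [map_zero, zero_mul])
    (fun α b₁ b₂ => by rw [map_add, add_mul])]
  rw [← coeff_spec ι x h f, ← coeff_spec ι x h g]

/-- coordinate function as an additive group hom -/
def coeffHom : A →+ ((Fin n → ℕ) →₀ R) :=
  AddMonoidHom.mk' (coeffF ι x h) (coeff_add ι x h)

theorem coeff_Gf {d : ℕ} {f : A} (hf : f ∈ Gf ι x d) :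
    ∀ α, d ≤ deg α → coeffHom ι x h f α = 0 := by
  refine AddSubgroup.closure_induction ?_ ?_ ?_ ?_ hf
  · rintro b ⟨r, β, hβ, rfl⟩ α hα
    show coeffF ι x h (ι r * spbwMon x β) α = 0
    rw [coeff_single ι x h]
    exact Finsupp.single_eq_of_ne (fun hh => by subst hh; omega)
  · intro α hα
    rw [map_zero]
    rfl
  · intro b b' _ _ hb hb' α hα
    rw [map_add, Finsupp.add_apply, hb α hα, hb' α hα, add_zero]
  · intro b _ hb α hα
    rw [map_neg, Finsupp.neg_apply, hb α hα, neg_zero]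

include h in
theorem mem_Gf_total (f : A) : ∃ D, f ∈ Gf ι x D := by
  refine ⟨(coeffF ι x h f).support.sup deg + 1, ?_⟩
  obtain ⟨D, hD⟩ : ∃ D, (coeffF ι x h f).support.sup deg + 1 = D := ⟨_, rfl⟩
  rw [hD]
  rw [coeff_spec ι x h f]
  apply sum_mem
  intro α hα
  apply mem_Gf
  have hle : deg α ≤ (coeffF ι x h f).support.sup deg := Finset.le_sup hα
  omega

end Coeff

/-- sum against reversed monomials with right coefficients -/
def Phi : ((Fin n → ℕ) →₀ R) →+ A :=
  AddMonoidHom.mk' (fun cc => cc.sum fun α r => monRev x α * ι r)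
    (fun c1 c2 => Finsupp.sum_add_index' (fun α => by rw [map_zero, mul_zero])
      (fun α b₁ b₂ => by rw [map_add, mul_add]))

theorem Phi_single (α : Fin n → ℕ) (r : R) :
    Phi ι x (Finsupp.single α r) = monRev x α * ι r := by
  have hh : Phi ι x (Finsupp.single α r)
      = (Finsupp.single α r).sum fun β s => monRev x β * ι s := rfl
  rw [hh, Finsupp.sum_single_index (by rw [map_zero, mul_zero])]


section Rel2
variable (σ : Fin n → R ≃+* R) (δ : Fin n → R → R)
  (hrel : ∀ (i : Fin n) (r : R), x i * ι r = ι (σ i r) * x i + ι (δ i r))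
  (c : Fin n → Fin n → R)
  (hc : ∀ i j : Fin n, x j * x i - ι (c i j) * (x i * x j) ∈ spbwSpan ι x)
  (hcu : ∀ i j : Fin n, i < j → IsUnit (c i j))

include hrel hc hcu in
theorem Gf_le_range : ∀ d, Gf ι x d ≤ (Phi ι x).range := by
  intro d
  induction d using Nat.strong_induction_on with
  | _ d IH =>
  rw [Gf, AddSubgroup.closure_le]
  rintro b ⟨r, α, hα, rfl⟩
  obtain ⟨u, hu, hP2⟩ := P2 ι x σ δ hrel c hc hcu (deg α) α le_rfl
  set g := monRev x α - ι u * spbwMon x α with hgdef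
  set s0 := (SigF σ α).symm ((↑hu.unit⁻¹ : R) * r) with hs0def
  have hP1 := P1 ι x σ δ hrel c hc (deg α) α s0 le_rfl
  set g2 := spbwMon x α * ι s0 - ι (SigF σ α s0) * spbwMon x α with hg2def
  have hkey : ι r * spbwMon x α = Phi ι x (Finsupp.single α s0) - ι u * g2 - g * ι s0 := by
    rw [Phi_single]
    have h1 : monRev x α = ι u * spbwMon x α + g := by rw [hgdef]; noncomm_ring
    have h2 : spbwMon x α * ι s0 = ι (SigF σ α s0) * spbwMon x α + g2 := by
      rw [hg2def]; noncomm_ring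
    have h3 : SigF σ α s0 = (↑hu.unit⁻¹ : R) * r := by
      rw [hs0def]; exact (SigF σ α).apply_symm_apply _
    have h4 : u * ((↑hu.unit⁻¹ : R) * r) = r := by
      rw [← mul_assoc, IsUnit.mul_val_inv, one_mul]
    rw [h1, add_mul, mul_assoc, h2, mul_add, ← mul_assoc, ← map_mul, h3, h4]
    noncomm_ring
  rw [hkey]
  refine sub_mem (sub_mem ?_ ?_) ?_
  · exact AddMonoidHom.mem_range.mpr ⟨_, rfl⟩
  · exact IH (deg α) hα (Gf_iota_mul ι x u hP1)
  · exact IH (deg α) hα (Gf_mul_iota ι x σ δ hrel c hc s0 hP2)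

include hrel hc hcu in
theorem Phi_inj_aux (h : IsSkewPBWExtension ι x) :
    ∀ d (cc : (Fin n → ℕ) →₀ R), (∀ α ∈ cc.support, deg α ≤ d) → Phi ι x cc = 0 →
    ∀ α₀, deg α₀ = d → cc α₀ = 0 := by
  intro d cc hbound hzero α₀ hα₀
  have H : ∀ α : Fin n → ℕ, deg α ≤ d → ∃ w e,
      monRev x α * ι (cc α) = ι w * spbwMon x α + e ∧ e ∈ Gf ι x d ∧
      (w = 0 → cc α = 0) := by
    intro α hα
    obtain ⟨u, hu, hP2⟩ := P2 ι x σ δ hrel c hc hcu (deg α) α le_rfl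
    set g := monRev x α - ι u * spbwMon x α with hgdef
    have hP1 := P1 ι x σ δ hrel c hc (deg α) α (cc α) le_rfl
    set g2 := spbwMon x α * ι (cc α) - ι (SigF σ α (cc α)) * spbwMon x α with hg2def
    refine ⟨u * SigF σ α (cc α), ι u * g2 + g * ι (cc α), ?_, ?_, ?_⟩
    · have h1 : monRev x α = ι u * spbwMon x α + g := by rw [hgdef]; noncomm_ring
      have h2 : spbwMon x α * ι (cc α) = ι (SigF σ α (cc α)) * spbwMon x α + g2 := by
        rw [hg2def]; noncomm_ring
      rw [h1, add_mul, mul_assoc, h2, map_mul]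
      noncomm_ring
    · exact add_mem (Gf_mono ι x hα (Gf_iota_mul ι x u hP1))
        (Gf_mono ι x hα (Gf_mul_iota ι x σ δ hrel c hc (cc α) hP2))
    · intro hw
      have hs : SigF σ α (cc α) = 0 := (hu.mul_right_eq_zero).mp hw
      exact (SigF σ α).injective (by rw [hs, map_zero])
  choose! w e hrepr hmem himp using H
  have hPhi : Phi ι x cc = ∑ α ∈ cc.support, monRev x α * ι (cc α) := rfl
  have hsum : Phi ι x cc =
      (∑ α ∈ cc.support, ι (w α) * spbwMon x α) + ∑ α ∈ cc.support, e α := by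
    rw [hPhi, ← Finset.sum_add_distrib]
    exact Finset.sum_congr rfl (fun α hα => hrepr α (hbound α hα))
  have hE : (∑ α ∈ cc.support, e α) ∈ Gf ι x d :=
    sum_mem (fun α hα => hmem α (hbound α hα))
  have hc2 : coeffHom ι x h (∑ α ∈ cc.support, e α) α₀ = 0 :=
    coeff_Gf ι x h hE α₀ (by omega)
  have hc1 : coeffHom ι x h (∑ α ∈ cc.support, ι (w α) * spbwMon x α) α₀
      = ∑ α ∈ cc.support, (Finsupp.single α (w α)) α₀ := by
    rw [map_sum, Finsupp.finset_sum_apply]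
    apply Finset.sum_congr rfl
    intro α _
    have hcs : coeffHom ι x h (ι (w α) * spbwMon x α) = Finsupp.single α (w α) :=
      coeff_single ι x h (w α) α
    rw [hcs]
  have hcomb : (∑ α ∈ cc.support, (Finsupp.single α (w α)) α₀) = 0 := by
    have h5 := congrArg (fun z => coeffHom ι x h z α₀) hsum
    simp only [hzero, map_zero, map_add, Finsupp.add_apply, Finsupp.coe_zero,
      Pi.zero_apply] at h5
    rw [hc1, hc2, add_zero] at h5
    exact h5.symm
  by_cases hmem0 : α₀ ∈ cc.support
  · have hval : (∑ α ∈ cc.support, (Finsupp.single α (w α)) α₀) = w α₀ := by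
      rw [Finset.sum_eq_single_of_mem α₀ hmem0
        (fun β _ hβ => Finsupp.single_eq_of_ne' hβ), Finsupp.single_eq_same]
    exact himp α₀ (hbound α₀ hmem0) (by rw [← hval, hcomb])
  · exact Finsupp.notMem_support_iff.mp hmem0

include hrel hc hcu in
theorem Phi_inj (h : IsSkewPBWExtension ι x) :
    ∀ d (cc : (Fin n → ℕ) →₀ R), (∀ α ∈ cc.support, deg α ≤ d) → Phi ι x cc = 0 →
    cc = 0 := by
  intro d
  induction d using Nat.strong_induction_on with
  | _ d IH =>
  intro cc hbound hzero
  have haux := Phi_inj_aux ι x σ δ hrel c hc hcu h d cc hbound hzero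
  cases d with
  | zero =>
    ext α
    by_cases hα : deg α = 0
    · rw [haux α hα]; rfl
    · have hns : α ∉ cc.support := fun hm =>
        hα (le_antisymm (hbound α hm) (Nat.zero_le _))
      rw [Finsupp.notMem_support_iff.mp hns]; rfl
  | succ d₀ =>
    refine IH d₀ (by omega) cc ?_ hzero
    intro α hm
    have h1 := hbound α hm
    rcases Nat.lt_or_ge (deg α) (d₀ + 1) with h' | h'
    · omega
    · exact absurd (haux α (by omega)) (Finsupp.mem_support_iff.mp hm)

include hrel hc hcu in
theorem repr_unique_right (h : IsSkewPBWExtension ι x) (f : A) :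
    ∃! cc : (Fin n → ℕ) →₀ R, f = Phi ι x cc := by
  obtain ⟨D, hD⟩ := mem_Gf_total ι x h f
  obtain ⟨cc, hcc⟩ := AddMonoidHom.mem_range.mp
    (Gf_le_range ι x σ δ hrel c hc hcu D hD)
  refine ⟨cc, hcc.symm, ?_⟩
  intro cc' hcc'
  have hz : Phi ι x (cc' - cc) = 0 := by
    rw [map_sub, hcc, ← hcc', sub_self]
  have h0 := Phi_inj ι x σ δ hrel c hc hcu h ((cc' - cc).support.sup deg)
    (cc' - cc) (fun α hm => Finset.le_sup hm) hz
  exact sub_eq_zero.mp h0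

end Rel2

open MulOpposite in
theorem opMon (α : Fin n → ℕ) :
    spbwMon (fun i => op (x i)) α = op (monRev x α) := by
  have h1 : (List.ofFn fun i => (op (x i) : Aᵐᵒᵖ) ^ α i)
      = (List.ofFn fun i => x i ^ α i).map op := by
    rw [List.map_ofFn]
    apply congrArg List.ofFn
    funext i
    exact (MulOpposite.op_pow (x i) (α i)).symm
  show (List.ofFn fun i => (op (x i) : Aᵐᵒᵖ) ^ α i).prod = op (monRev x α)
  rw [h1]
  apply unop_injective
  rw [unop_op, MulOpposite.unop_list_prod, List.map_map, monRev]
  congr 1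
  have : (unop ∘ op : A → A) = id := funext (fun _ => rfl)
  rw [this, List.map_id]

open MulOpposite in
theorem op_sum_eq (c' : (Fin n → ℕ) →₀ Rᵐᵒᵖ) :
    (c'.sum fun α r => (RingHom.op ι) r * spbwMon (fun i => op (x i)) α)
      = op (Phi ι x (Finsupp.mapRange unop rfl c')) := by
  have h1 : Phi ι x (Finsupp.mapRange unop rfl c')
      = c'.sum fun α r' => monRev x α * ι (unop r') := by
    have h0 : Phi ι x (Finsupp.mapRange unop rfl c')
        = (Finsupp.mapRange unop rfl c').sum fun α r => monRev x α * ι r := rfl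
    rw [h0]
    exact Finsupp.sum_mapRange_index (fun α => by rw [map_zero, mul_zero])
  rw [h1, Finsupp.sum, Finsupp.sum, Finset.op_sum]
  apply Finset.sum_congr rfl
  intro α _
  rw [opMon, MulOpposite.op_mul]
  rfl

/-- the right span `R + x₁ R + ⋯ + xₙ R` -/
def RS (ι : R →+* A) (x : Fin n → A) : Set A :=
  {a | ∃ (r₀ : R) (cl : Fin n → R), a = ι r₀ + ∑ l, x l * ι (cl l)}

theorem RS_zero : (0 : A) ∈ RS ι x :=
  ⟨0, fun _ => 0, by simp⟩

theorem RS_iota (r : R) : ι r ∈ RS ι x :=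
  ⟨r, fun _ => 0, by simp⟩

theorem RS_xiota (l : Fin n) (r : R) : x l * ι r ∈ RS ι x := by
  classical
  refine ⟨0, fun m => if m = l then r else 0, ?_⟩
  rw [map_zero, zero_add]
  rw [Finset.sum_eq_single_of_mem l (Finset.mem_univ l) (fun m _ hm => by
    show x m * ι (if m = l then r else 0) = 0
    rw [if_neg hm, map_zero, mul_zero])]
  show x l * ι r = x l * ι (if l = l then r else 0)
  rw [if_pos rfl]

theorem RS_add {a b : A} (ha : a ∈ RS ι x) (hb : b ∈ RS ι x) : a + b ∈ RS ι x := by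
  obtain ⟨r0, cl, rfl⟩ := ha
  obtain ⟨r0', cl', rfl⟩ := hb
  refine ⟨r0 + r0', cl + cl', ?_⟩
  have hterm : ∀ l, x l * ι ((cl + cl') l) = x l * ι (cl l) + x l * ι (cl' l) := fun l => by
    rw [Pi.add_apply, map_add, mul_add]
  rw [map_add, Finset.sum_congr rfl (fun l _ => hterm l), Finset.sum_add_distrib]
  abel

theorem RS_neg {a : A} (ha : a ∈ RS ι x) : -a ∈ RS ι x := by
  obtain ⟨r0, cl, rfl⟩ := ha
  refine ⟨-r0, -cl, ?_⟩
  rw [map_neg, neg_add]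
  congr 1
  rw [← Finset.sum_neg_distrib]
  apply Finset.sum_congr rfl
  intro l _
  rw [Pi.neg_apply, map_neg, mul_neg]

theorem RS_sub {a b : A} (ha : a ∈ RS ι x) (hb : b ∈ RS ι x) : a - b ∈ RS ι x := by
  rw [sub_eq_add_neg]
  exact RS_add ι x ha (RS_neg ι x hb)

open MulOpposite in
theorem RS_op {a : A} (ha : a ∈ RS ι x) :
    op a ∈ spbwSpan (RingHom.op ι) (fun l => op (x l)) := by
  obtain ⟨r0, cl, rfl⟩ := ha
  refine ⟨op r0, fun l => op (cl l), ?_⟩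
  rw [MulOpposite.op_add, Finset.op_sum]
  congr 1

section Rel3
variable (σ : Fin n → R ≃+* R) (δ : Fin n → R → R)
  (hrel : ∀ (i : Fin n) (r : R), x i * ι r = ι (σ i r) * x i + ι (δ i r))

include hrel in
theorem iota_mul_x (r : R) (i : Fin n) :
    ι r * x i = x i * ι ((σ i).symm r) - ι (δ i ((σ i).symm r)) := by
  have h1 := hrel i ((σ i).symm r)
  rw [RingEquiv.apply_symm_apply] at h1
  rw [h1]
  noncomm_ring

include hrel in
theorem span_RS {s : A} (hs : s ∈ spbwSpan ι x) : s ∈ RS ι x := by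
  obtain ⟨r0, cl, rfl⟩ := hs
  apply RS_add ι x (RS_iota ι x r0)
  apply Finset.sum_induction _ (· ∈ RS ι x) (fun a b ha hb => RS_add ι x ha hb)
    (RS_zero ι x)
  intro l _
  rw [iota_mul_x ι x σ δ hrel (cl l) l]
  exact RS_sub ι x (RS_xiota ι x l _) (RS_iota ι x _)

include hrel in
theorem op_mulgen (i j : Fin n) (b : R)
    (hb : x i * x j - ι b * (x j * x i) ∈ spbwSpan ι x) :
    x i * x j - (x j * x i) * ι ((σ i).symm ((σ j).symm b)) ∈ RS ι x := by
  set t := (σ j).symm b with htdef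
  set s2 := (σ i).symm t with hs2def
  have e1 : ι b * x j = x j * ι t - ι (δ j t) := iota_mul_x ι x σ δ hrel b j
  have e2 : ι t * x i = x i * ι s2 - ι (δ i s2) := iota_mul_x ι x σ δ hrel t i
  have e3 : ι (δ j t) * x i = x i * ι ((σ i).symm (δ j t)) - ι (δ i ((σ i).symm (δ j t))) :=
    iota_mul_x ι x σ δ hrel (δ j t) i
  have key : x i * x j - (x j * x i) * ι s2 =
      (x i * x j - ι b * (x j * x i)) - x j * ι (δ i s2)
        - x i * ι ((σ i).symm (δ j t)) + ι (δ i ((σ i).symm (δ j t))) := by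
    have hexp : ι b * (x j * x i) = (x j * x i) * ι s2 - x j * ι (δ i s2)
        - x i * ι ((σ i).symm (δ j t)) + ι (δ i ((σ i).symm (δ j t))) := by
      rw [← mul_assoc, e1, sub_mul, mul_assoc, e2, e3]
      noncomm_ring
    rw [hexp]
    noncomm_ring
  rw [key]
  apply RS_add ι x
  apply RS_sub ι x
  apply RS_sub ι x
  · exact span_RS ι x σ δ hrel hb
  · exact RS_xiota ι x j _
  · exact RS_xiota ι x i _
  · exact RS_iota ι x _

end Rel3

theorem span_iota_mul (r : R) {s : A} (hs : s ∈ spbwSpan ι x) :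
    ι r * s ∈ spbwSpan ι x := by
  obtain ⟨r0, cl, rfl⟩ := hs
  refine ⟨r * r0, fun l => r * cl l, ?_⟩
  rw [mul_add, ← map_mul, Finset.mul_sum]
  congr 1
  apply Finset.sum_congr rfl
  intro l _
  rw [← mul_assoc, ← map_mul]

theorem span_neg {s : A} (hs : s ∈ spbwSpan ι x) : -s ∈ spbwSpan ι x := by
  obtain ⟨r0, cl, rfl⟩ := hs
  refine ⟨-r0, fun l => -(cl l), ?_⟩
  rw [map_neg, neg_add]
  congr 1
  rw [← Finset.sum_neg_distrib]
  apply Finset.sum_congr rfl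
  intro l _
  rw [map_neg, neg_mul]

end Main
end SPBWAux

open SPBWAux in
theorem op_skewPBW {R A : Type*} [Ring R] [Ring A] {n : ℕ}
    (ι : R →+* A) (x : Fin n → A) (h : IsSkewPBWExtension ι x)
    (σ : Fin n → R ≃+* R) (δ : Fin n → R → R)
    (hδ : ∀ i, IsSigmaDerivation (σ i) (δ i))
    (hrel : ∀ (i : Fin n) (r : R), x i * ι r = ι (σ i r) * x i + ι (δ i r))
    (c : Fin n → Fin n → R)
    (hc : ∀ i j : Fin n, x j * x i - ι (c i j) * (x i * x j) ∈ spbwSpan ι x)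
    (hcu : ∀ i j : Fin n, i < j → IsUnit (c i j)) :
    IsSkewPBWExtension (RingHom.op ι) (fun i => op (x i)) ∧
    ∃ (σ' : Fin n → Rᵐᵒᵖ ≃+* Rᵐᵒᵖ) (δ' : Fin n → Rᵐᵒᵖ → Rᵐᵒᵖ)
      (c' : Fin n → Fin n → Rᵐᵒᵖ),
      (∀ (i : Fin n) (r : R), σ' i (op r) = op ((σ i).symm r)) ∧
      (∀ (i : Fin n) (r : R), δ' i (op r) = op (-δ i ((σ i).symm r))) ∧
      (∀ i, IsSigmaDerivation (σ' i) (δ' i)) ∧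
      (∀ (i : Fin n) (r' : Rᵐᵒᵖ), op (x i) * RingHom.op ι r' =
        RingHom.op ι (σ' i r') * op (x i) + RingHom.op ι (δ' i r')) ∧
      (∀ i j : Fin n, op (x j) * op (x i) -
        RingHom.op ι (c' i j) * (op (x i) * op (x j)) ∈
        spbwSpan (RingHom.op ι) (fun l => op (x l))) ∧
      (∀ i j : Fin n, i < j → IsUnit (c' i j)) := by
  classical
  constructor
  · constructor
    · -- injectivity
      intro a b hab
      have h2 : ι (unop a) = ι (unop b) := congrArg unop hab
      exact unop_injective (h.inj h2)
    · -- repr_unique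
      intro F
      obtain ⟨cc, hcc, huniq⟩ := repr_unique_right ι x σ δ hrel c hc hcu h (unop F)
      refine ⟨Finsupp.mapRange op rfl cc, ?_, ?_⟩
      · show F = (Finsupp.mapRange op rfl cc).sum fun α r =>
          (RingHom.op ι) r * spbwMon (fun i => op (x i)) α
        rw [op_sum_eq ι x]
        have hmr : Finsupp.mapRange unop rfl (Finsupp.mapRange op rfl cc) = cc := by
          ext α
          rw [Finsupp.mapRange_apply, Finsupp.mapRange_apply, unop_op]
        rw [hmr, ← hcc, op_unop]
      · intro c'' hc''
        rw [op_sum_eq ι x] at hc''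
        have h2 : unop F = Phi ι x (Finsupp.mapRange unop rfl c'') := by
          rw [hc'', unop_op]
        have h3 := huniq _ h2
        ext α
        calc c'' α = op (unop (c'' α)) := (op_unop _).symm
          _ = op ((Finsupp.mapRange unop rfl c'') α) := by rw [Finsupp.mapRange_apply]
          _ = op (cc α) := by rw [h3]
          _ = (Finsupp.mapRange op rfl cc) α := (Finsupp.mapRange_apply).symm
    · -- mul_coeff
      intro i r' hr'
      obtain ⟨a, rfl⟩ : ∃ a, r' = op a := ⟨unop r', (op_unop r').symm⟩
      have hane : a ≠ 0 := fun haz => hr' (by rw [haz]; rfl)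
      set c0 := (σ i).symm a with hc0
      have hc0ne : c0 ≠ 0 := fun hz => hane (by
        have h4 := congrArg (σ i) hz
        rwa [RingEquiv.apply_symm_apply, map_zero] at h4)
      refine ⟨op c0, fun hz => hc0ne (congrArg unop hz), ⟨op (-(δ i c0)), ?_⟩⟩
      apply unop_injective
      show ι (-(δ i c0)) = ι a * x i - x i * ι c0
      rw [iota_mul_x ι x σ δ hrel a i, ← hc0, map_neg]
      noncomm_ring
    · -- mul_gen
      intro i j
      obtain ⟨b, hbne, hbmem⟩ := h.mul_gen j i
      set s2 := (σ i).symm ((σ j).symm b) with hs2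
      refine ⟨op s2, ?_, ?_⟩
      · intro hz
        apply hbne
        have h1 : s2 = 0 := congrArg unop hz
        have h2 : (σ j).symm b = 0 := by
          have h4 := congrArg (σ i) h1
          rwa [RingEquiv.apply_symm_apply, map_zero] at h4
        have h3 := congrArg (σ j) h2
        rwa [RingEquiv.apply_symm_apply, map_zero] at h3
      · have hmem := op_mulgen ι x σ δ hrel i j b hbmem
        have heq : op (x j) * op (x i) - RingHom.op ι (op s2) * (op (x i) * op (x j))
            = op (x i * x j - (x j * x i) * ι s2) := rfl
        rw [heq]
        exact RS_op ι x hmem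
  · refine ⟨fun i => RingEquiv.op ((σ i).symm),
      fun i => fun r' => op (-(δ i ((σ i).symm (unop r')))),
      fun i j => op ((σ i).symm ((σ j).symm
        (if hij : i < j then (((hcu i j hij).unit⁻¹ : Rˣ) : R)
         else Classical.choose (h.mul_gen j i)))),
      fun i r => rfl, fun i r => rfl, ?_, ?_, ?_, ?_⟩
    · -- sigma derivation
      intro i
      constructor
      · intro r s
        obtain ⟨a, rfl⟩ : ∃ a, r = op a := ⟨unop r, (op_unop r).symm⟩
        obtain ⟨b, rfl⟩ : ∃ b, s = op b := ⟨unop s, (op_unop s).symm⟩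
        show op (-(δ i ((σ i).symm (unop (op a + op b))))) = _
        have h1 : unop (op a + op b) = a + b := rfl
        rw [h1, map_add, (hδ i).1, neg_add]
        rfl
      · intro r s
        obtain ⟨a, rfl⟩ : ∃ a, r = op a := ⟨unop r, (op_unop r).symm⟩
        obtain ⟨b, rfl⟩ : ∃ b, s = op b := ⟨unop s, (op_unop s).symm⟩
        show op (-(δ i ((σ i).symm (unop (op a * op b))))) = _
        have h1 : unop (op a * op b) = b * a := rfl
        rw [h1, map_mul, (hδ i).2, RingEquiv.apply_symm_apply]
        apply unop_injective
        show -(b * δ i ((σ i).symm a) + δ i ((σ i).symm b) * (σ i).symm a)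
            = (-(δ i ((σ i).symm b))) * (σ i).symm a + b * (-(δ i ((σ i).symm a)))
        noncomm_ring
    · -- commutation relation
      intro i r'
      obtain ⟨a, rfl⟩ : ∃ a, r' = op a := ⟨unop r', (op_unop r').symm⟩
      apply unop_injective
      show ι a * x i = x i * ι ((σ i).symm a) + ι (-(δ i ((σ i).symm a)))
      rw [iota_mul_x ι x σ δ hrel a i, map_neg]
      noncomm_ring
    · -- mul_gen with chosen constants
      intro i j
      set bsel := (if hij : i < j then (((hcu i j hij).unit⁻¹ : Rˣ) : R)
         else Classical.choose (h.mul_gen j i)) with hbseldef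
      have hbmem : x i * x j - ι bsel * (x j * x i) ∈ spbwSpan ι x := by
        by_cases hij : i < j
        · rw [hbseldef, dif_pos hij]
          have hsp := span_iota_mul ι x ((((hcu i j hij).unit⁻¹ : Rˣ)) : R) (hc i j)
          have heq2 : ι ((((hcu i j hij).unit⁻¹ : Rˣ)) : R) *
              (x j * x i - ι (c i j) * (x i * x j))
              = -(x i * x j - ι ((((hcu i j hij).unit⁻¹ : Rˣ)) : R) * (x j * x i)) := by
            calc ι ((((hcu i j hij).unit⁻¹ : Rˣ)) : R) *
                (x j * x i - ι (c i j) * (x i * x j))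
                = ι ((((hcu i j hij).unit⁻¹ : Rˣ)) : R) * (x j * x i) -
                  (ι ((((hcu i j hij).unit⁻¹ : Rˣ)) : R) * ι (c i j)) * (x i * x j) := by
                    noncomm_ring
              _ = ι ((((hcu i j hij).unit⁻¹ : Rˣ)) : R) * (x j * x i) - (x i * x j) := by
                    rw [← map_mul, IsUnit.val_inv_mul, map_one, one_mul]
              _ = -(x i * x j - ι ((((hcu i j hij).unit⁻¹ : Rˣ)) : R) * (x j * x i)) := by
                    noncomm_ring
          have h5 := span_neg ι x hsp
          rw [heq2, neg_neg] at h5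
          exact h5
        · rw [hbseldef, dif_neg hij]
          exact (Classical.choose_spec (h.mul_gen j i)).2
      have hmem := op_mulgen ι x σ δ hrel i j bsel hbmem
      have heq : op (x j) * op (x i) -
          RingHom.op ι (op ((σ i).symm ((σ j).symm bsel))) * (op (x i) * op (x j))
          = op (x i * x j - (x j * x i) * ι ((σ i).symm ((σ j).symm bsel))) := rfl
      rw [heq]
      exact RS_op ι x hmem
    · -- units
      intro i j hij
      have hval : (if hij' : i < j then (((hcu i j hij').unit⁻¹ : Rˣ) : R)
          else Classical.choose (h.mul_gen j i)) = (((hcu i j hij).unit⁻¹ : Rˣ) : R) :=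
        dif_pos hij
      show IsUnit (op ((σ i).symm ((σ j).symm
        (if hij' : i < j then (((hcu i j hij').unit⁻¹ : Rˣ) : R)
         else Classical.choose (h.mul_gen j i)))))
      rw [hval]
      exact IsUnit.op
        ((((hcu i j hij).unit⁻¹).isUnit.map ((σ j).symm)).map ((σ i).symm))
end
end

section
/- Let A be a bijective skew PBW extension over R with endomorphisms σ_i, derivations δ_i, and constants c_{i,j} ∈ R satisfying x_j x_i − c_{i,j} x_i x_j ∈ R + Rx_1 + ··· + Rx_n with c_{i,j} invertible. Then for all 1 ≤ i, j ≤ n, setting c'_{i,j} := σ_i^{-1}(σ_j^{-1}(c_{i,j}^{-1})), one has x_i x_j − x_j x_i c'_{i,j} ∈ R + x_1R + ··· + x_nR (the right R-submodule of A generated by 1, x_1, …, x_n). -/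
open scoped TensorProduct
open MulOpposite

noncomputable section

/-- The set `R + x₁R + ⋯ + xₙR` inside `A` (the right `R`-combinations of
`1, x₁, …, xₙ`). -/
def spbwSpanRight {R A : Type*} [Ring R] [Ring A] {n : ℕ} (ι : R →+* A)
    (x : Fin n → A) : Set A :=
  {a : A | ∃ (r₀ : R) (c : Fin n → R), a = ι r₀ + ∑ l, x l * ι (c l)}

/-- Let `A` be a bijective skew PBW extension over `R` with
automorphisms `σᵢ`, derivations `δᵢ`, and invertible constants `c_{i,j}`
satisfying `xⱼxᵢ − c_{i,j}xᵢxⱼ ∈ R + Rx₁ + ⋯ + Rxₙ`. Then for all `i, j`,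
setting `c'_{i,j} := σᵢ⁻¹(σⱼ⁻¹(c_{i,j}⁻¹))`, one has
`xᵢxⱼ − xⱼxᵢc'_{i,j} ∈ R + x₁R + ⋯ + xₙR`. -/
theorem op_quadratic_relation {R A : Type*} [Ring R] [Ring A] {n : ℕ}
    (ι : R →+* A) (x : Fin n → A) (h : IsSkewPBWExtension ι x)
    (σ : Fin n → R ≃+* R) (δ : Fin n → R → R)
    (hδ : ∀ i, IsSigmaDerivation (σ i) (δ i))
    (hrel : ∀ (i : Fin n) (r : R), x i * ι r = ι (σ i r) * x i + ι (δ i r))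
    (c : Fin n → Fin n → R)
    (hc : ∀ i j : Fin n, x j * x i - ι (c i j) * (x i * x j) ∈ spbwSpan ι x)
    (hcu : ∀ i j : Fin n, IsUnit (c i j)) :
    ∀ i j : Fin n,
      x i * x j - x j * x i * ι ((σ i).symm ((σ j).symm (Ring.inverse (c i j)))) ∈
        spbwSpanRight ι x := by
  intro i j
  -- closure facts for `spbwSpanRight`
  have hzero : (0 : A) ∈ spbwSpanRight ι x := ⟨0, 0, by simp⟩
  have hadd : ∀ a b : A, a ∈ spbwSpanRight ι x → b ∈ spbwSpanRight ι x →
      a + b ∈ spbwSpanRight ι x := by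
    rintro a b ⟨r, cr, rfl⟩ ⟨s, cs, rfl⟩
    refine ⟨r + s, cr + cs, ?_⟩
    simp only [Pi.add_apply, map_add, mul_add, Finset.sum_add_distrib]
    abel
  have hneg : ∀ a : A, a ∈ spbwSpanRight ι x → -a ∈ spbwSpanRight ι x := by
    rintro a ⟨r, cr, rfl⟩
    refine ⟨-r, -cr, ?_⟩
    simp only [Pi.neg_apply, map_neg, mul_neg]
    rw [Finset.sum_neg_distrib]
    abel
  have hι : ∀ r : R, ι r ∈ spbwSpanRight ι x := fun r => ⟨r, 0, by simp⟩
  have hx : ∀ (l : Fin n) (r : R), x l * ι r ∈ spbwSpanRight ι x := by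
    intro l r
    refine ⟨0, Pi.single l r, ?_⟩
    rw [Finset.sum_eq_single l (fun k _ hk => by simp [Pi.single_apply, hk]) (by simp)]
    simp
  have hιx : ∀ (a : R) (l : Fin n), ι a * x l ∈ spbwSpanRight ι x := by
    intro a l
    have h0 := hrel l ((σ l).symm a)
    rw [RingEquiv.apply_symm_apply] at h0
    have : ι a * x l = x l * ι ((σ l).symm a) + ι (-(δ l ((σ l).symm a))) := by
      rw [h0, map_neg]; abel
    rw [this]
    exact hadd _ _ (hx _ _) (hι _)
  have hsum : ∀ f : Fin n → A, (∀ l, f l ∈ spbwSpanRight ι x) →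
      (∑ l, f l) ∈ spbwSpanRight ι x := by
    intro f hf
    exact Finset.sum_induction f _ hadd hzero (fun l _ => hf l)
  -- main computation
  obtain ⟨r₀, cs, hS⟩ := hc i j
  set u := Ring.inverse (c i j) with hu_def
  have hu : ι u * ι (c i j) = 1 := by
    rw [hu_def, ← map_mul, Ring.inverse_mul_cancel _ (hcu i j), map_one]
  set w := (σ j).symm u with hw_def
  set c' := (σ i).symm w with hc'_def
  have hσw : σ j w = u := by rw [hw_def]; exact (σ j).apply_symm_apply u
  have hσc' : σ i c' = w := by rw [hc'_def]; exact (σ i).apply_symm_apply w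
  clear_value u w c'
  have h1 : ι u * x j = x j * ι w - ι (δ j w) := by
    have h0 := hrel j w
    rw [hσw] at h0
    rw [h0]; abel
  have h2 : ι w * x i = x i * ι c' - ι (δ i c') := by
    have h0 := hrel i c'
    rw [hσc'] at h0
    rw [h0]; abel
  have h3 : x i * x j = ι u * (x j * x i - (ι r₀ + ∑ l, ι (cs l) * x l)) := by
    have hS' : x j * x i - (ι r₀ + ∑ l, ι (cs l) * x l) = ι (c i j) * (x i * x j) := by
      rw [← hS]; abel
    rw [hS', ← mul_assoc, hu, one_mul]
  have e1 : ι u * (x j * x i) = x j * x i * ι c' - x j * ι (δ i c') - ι (δ j w) * x i := by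
    rw [← mul_assoc, h1, sub_mul, mul_assoc, h2]
    noncomm_ring
  have key : x i * x j - x j * x i * ι c' =
      -(x j * ι (δ i c')) + -(ι (δ j w) * x i) + -(ι u * ι r₀) +
        ∑ l, -(ι u * (ι (cs l) * x l)) := by
    rw [h3, mul_sub, e1, mul_add, Finset.mul_sum, Finset.sum_neg_distrib]
    abel
  rw [key]
  refine hadd _ _ (hadd _ _ (hadd _ _ (hneg _ (hx _ _)) (hneg _ ?_)) (hneg _ ?_)) ?_
  · exact hιx _ _
  · rw [← map_mul]; exact hι _
  · refine hsum _ fun l => hneg _ ?_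
    rw [← mul_assoc, ← map_mul]
    exact hιx _ _
end
end

section
/- If A is a bijective skew PBW extension over R with generators x_1,…,x_n, then the opposite ring A^{op} is a free left R^{op}-module (equivalently, A is a free right R-module) with basis the reversed monomials Mon(A^{op}) = {x_n^{α_n}···x_1^{α_1} : (α_n,…,α_1) ∈ ℕ^n}. -/
open scoped TensorProduct
open MulOpposite

noncomputable section

namespace SPBW

variable {R A : Type*} [Ring R] [Ring A] {n : ℕ}

/-- total degree -/
def sdeg (α : Fin n → ℕ) : ℕ := ∑ i, α i

/-- add 1 to the exponent at `j` -/
def eadd (α : Fin n → ℕ) (j : Fin n) : Fin n → ℕ := fun i => α i + if i = j then 1 else 0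

/-- reversed monomial `xₙ^{αₙ} ⋯ x₁^{α₁}` -/
def srevMon (x : Fin n → A) (α : Fin n → ℕ) : A := ((List.ofFn fun i => x i ^ α i).reverse).prod

lemma sdeg_eadd (α : Fin n → ℕ) (j : Fin n) : sdeg (eadd α j) = sdeg α + 1 := by
  simp [sdeg, eadd, Finset.sum_add_distrib]

lemma sdeg_eq_zero {α : Fin n → ℕ} (h : sdeg α = 0) : α = fun _ => 0 := by
  funext i
  exact Finset.sum_eq_zero_iff.mp h i (Finset.mem_univ i)

lemma exists_decomp {β : Fin n → ℕ} (h : β ≠ fun _ => 0) (top : Bool) :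
    ∃ (k : Fin n) (β' : Fin n → ℕ), β = eadd β' k ∧
      (if top then (∀ i, k < i → β' i = 0) else (∀ i, i < k → β' i = 0)) ∧
      sdeg β = sdeg β' + 1 := by
  classical
  have hne : (Finset.univ.filter fun i => β i ≠ 0).Nonempty := by
    by_contra hc
    apply h
    funext i
    by_contra hi
    exact hc ⟨i, Finset.mem_filter.mpr ⟨Finset.mem_univ i, hi⟩⟩
  set S := Finset.univ.filter fun i => β i ≠ 0 with hS
  set k : Fin n := if top then S.max' hne else S.min' hne with hk
  have hkmem : k ∈ S := by
    rw [hk]; split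
    · exact S.max'_mem hne
    · exact S.min'_mem hne
  have hkne : β k ≠ 0 := (Finset.mem_filter.mp hkmem).2
  refine ⟨k, fun i => β i - if i = k then 1 else 0, ?_, ?_, ?_⟩
  · funext i
    simp only [eadd]
    by_cases hik : i = k
    · subst hik; simp; omega
    · simp [hik]
  · have hz : ∀ i, i ∉ S → β i = 0 := by
      intro i hi
      by_contra hbi
      exact hi (Finset.mem_filter.mpr ⟨Finset.mem_univ i, hbi⟩)
    split
    · next htop =>
      intro i hi
      have : β i = 0 := by
        by_contra hbi
        have hmem : i ∈ S := Finset.mem_filter.mpr ⟨Finset.mem_univ i, hbi⟩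
        have : i ≤ k := by rw [hk, if_pos htop]; exact Finset.le_max' _ i hmem
        exact absurd hi (not_lt.mpr this)
      simp [this]
    · next htop =>
      intro i hi
      have : β i = 0 := by
        by_contra hbi
        have hmem : i ∈ S := Finset.mem_filter.mpr ⟨Finset.mem_univ i, hbi⟩
        have : k ≤ i := by
          rw [hk, if_neg htop]; exact Finset.min'_le _ i hmem
        exact absurd hi (not_lt.mpr this)
      simp [this]
  · simp only [sdeg]
    have step : ∀ i ∈ Finset.univ, β i = (β i - if i = k then 1 else 0) + (if i = k then 1 else 0) := by
      intro i _
      by_cases hik : i = k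
      · subst hik; simp; omega
      · simp [hik]
    calc ∑ i, β i = ∑ i, ((β i - if i = k then 1 else 0) + (if i = k then 1 else 0)) :=
          Finset.sum_congr rfl step
      _ = (∑ i, (β i - if i = k then 1 else 0)) + ∑ i, (if i = k then 1 else 0) :=
          Finset.sum_add_distrib
      _ = (∑ i, (β i - if i = k then 1 else 0)) + 1 := by simp

/-- abstract list lemma for appending a factor -/
lemma list_prod_mul {M : Type*} [Monoid M] (L L' : List M) (j : ℕ) (z : M)
    (hL : j < L.length) (hL' : L'.length = L.length)
    (hag : ∀ k (hk : k < L.length), k < j → L[k] = L'[k]'(by omega))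
    (hj : L'[j]'(by omega) = L[j] * z)
    (h1 : ∀ k (hk : k < L.length), j < k → L[k] = 1)
    (h1' : ∀ k (hk : k < L.length), j < k → L'[k]'(by omega) = 1) :
    L.prod * z = L'.prod := by
  have key : ∀ (N : List M) (_ : j < N.length),
      (∀ k (hk : k < N.length), j < k → N[k] = 1) → N.prod = (N.take (j+1)).prod := by
    intro N hjN hN1
    conv_lhs => rw [← List.prod_take_mul_prod_drop N (j+1)]
    have : (N.drop (j+1)).prod = 1 := by
      apply List.prod_eq_one
      intro a ha
      rw [List.mem_iff_getElem] at ha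
      obtain ⟨k, hk, rfl⟩ := ha
      have hk2 : j + 1 + k < N.length := by
        simp only [List.length_drop] at hk; omega
      rw [List.getElem_drop]
      exact hN1 _ hk2 (by omega)
    rw [this, mul_one]
  have hLp : L.prod = (L.take (j+1)).prod := key L hL h1
  have hLp' : L'.prod = (L'.take (j+1)).prod :=
    key L' (by omega) (fun k hk hjk => h1' k (by omega) hjk)
  rw [hLp, hLp', List.prod_take_succ L j hL, List.prod_take_succ L' j (by omega)]
  have htake : L.take j = L'.take j := by
    apply List.ext_getElem
    · simp [hL', List.length_take]
    · intro k h1k h2k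
      rw [List.getElem_take, List.getElem_take]
      exact hag k (by simp [List.length_take] at h1k; omega)
        (by simp [List.length_take] at h1k; omega)
  rw [htake, hj, mul_assoc]

lemma spbwMon_zero (x : Fin n → A) : spbwMon x (fun _ => 0) = 1 := by
  apply List.prod_eq_one
  intro a ha
  rw [List.mem_ofFn] at ha
  obtain ⟨i, rfl⟩ := ha
  simp

lemma srevMon_zero (x : Fin n → A) : srevMon x (fun _ => 0) = 1 := by
  unfold srevMon
  apply List.prod_eq_one
  intro a ha
  rw [List.mem_reverse, List.mem_ofFn] at ha
  obtain ⟨i, rfl⟩ := ha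
  simp

lemma spbwMon_mul_x (x : Fin n → A) (β : Fin n → ℕ) (j : Fin n)
    (hβ : ∀ i, j < i → β i = 0) :
    spbwMon x β * x j = spbwMon x (eadd β j) := by
  refine list_prod_mul (List.ofFn fun i => x i ^ β i) (List.ofFn fun i => x i ^ eadd β j i)
    (j : ℕ) (x j) (by simp [j.isLt]) (by simp) ?_ ?_ ?_ ?_
  · intro k hk hkj
    have hk' : k < n := by simpa using hk
    simp only [List.getElem_ofFn]
    have hne : (⟨k, hk'⟩ : Fin n) ≠ j := by
      simp [Fin.ext_iff]; omega
    simp [eadd, hne]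
  · simp only [List.getElem_ofFn]
    have he : (⟨(j:ℕ), by simpa using j.isLt⟩ : Fin n) = j := by ext; simp
    rw [he]
    simp [eadd, pow_succ]
  · intro k hk hjk
    have hk' : k < n := by simpa using hk
    simp only [List.getElem_ofFn]
    have : β ⟨k, hk'⟩ = 0 := hβ _ (by rw [Fin.lt_def]; simpa using hjk)
    simp [this]
  · intro k hk hjk
    have hk' : k < n := by simpa using hk
    simp only [List.getElem_ofFn]
    have hne : (⟨k, hk'⟩ : Fin n) ≠ j := by
      simp [Fin.ext_iff]; omega
    have : β ⟨k, hk'⟩ = 0 := hβ _ (by rw [Fin.lt_def]; simpa using hjk)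
    simp [eadd, this, hne]

lemma srevMon_mul_x (x : Fin n → A) (α : Fin n → ℕ) (l : Fin n)
    (hα : ∀ i, i < l → α i = 0) :
    srevMon x α * x l = srevMon x (eadd α l) := by
  unfold srevMon
  have hn : 0 < n := l.pos
  have hll : (l : ℕ) < n := l.isLt
  refine list_prod_mul ((List.ofFn fun i => x i ^ α i).reverse)
    ((List.ofFn fun i => x i ^ eadd α l i).reverse) (n - 1 - (l : ℕ)) (x l)
    (by simp; omega) (by simp) ?_ ?_ ?_ ?_
  · intro k hk hkj
    have hk' : k < n := by simpa using hk
    simp only [List.getElem_reverse, List.length_ofFn, List.getElem_ofFn]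
    have hne : (⟨n - 1 - k, by omega⟩ : Fin n) ≠ l := by
      simp [Fin.ext_iff]; omega
    simp [eadd, hne]
  · simp only [List.getElem_reverse, List.length_ofFn, List.getElem_ofFn]
    have he : (⟨n - 1 - (n - 1 - (l:ℕ)), by omega⟩ : Fin n) = l := by ext; simp; omega
    rw [he]
    simp [eadd, pow_succ]
  · intro k hk hjk
    have hk' : k < n := by simpa using hk
    simp only [List.getElem_reverse, List.length_ofFn, List.getElem_ofFn]
    have : α ⟨n - 1 - k, by omega⟩ = 0 := hα _ (by rw [Fin.lt_def]; simp; omega)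
    simp [this]
  · intro k hk hjk
    have hk' : k < n := by simpa using hk
    simp only [List.getElem_reverse, List.length_ofFn, List.getElem_ofFn]
    have hne : (⟨n - 1 - k, by omega⟩ : Fin n) ≠ l := by
      simp [Fin.ext_iff]; omega
    have : α ⟨n - 1 - k, by omega⟩ = 0 := hα _ (by rw [Fin.lt_def]; simp; omega)
    simp [eadd, this, hne]

lemma op_srevMon (x : Fin n → A) (α : Fin n → ℕ) :
    op (srevMon x α) = spbwMon (fun i => op (x i)) α := by
  unfold srevMon spbwMon
  rw [op_list_prod, List.map_reverse, List.reverse_reverse, List.map_ofFn]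
  have : (op ∘ fun i => x i ^ α i) = fun i => op (x i) ^ α i := by
    funext i; simp [Function.comp, op_pow]
  rw [this]


section Rep

variable (ι : R →+* A) (x : Fin n → A)

/-- the left-representation map -/
def psiFun (c : (Fin n → ℕ) →₀ R) : A := c.sum fun α r => ι r * spbwMon x α

lemma psiFun_zero : psiFun ι x 0 = 0 := Finsupp.sum_zero_index

lemma psiFun_add (cc d : (Fin n → ℕ) →₀ R) :
    psiFun ι x (cc + d) = psiFun ι x cc + psiFun ι x d :=
  Finsupp.sum_add_index' (by simp) (by intro a b₁ b₂; rw [map_add, add_mul])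

lemma psiFun_single (α : Fin n → ℕ) (r : R) :
    psiFun ι x (Finsupp.single α r) = ι r * spbwMon x α :=
  Finsupp.sum_single_index (by simp)

variable (h : IsSkewPBWExtension ι x)
include h

lemma psiFun_bij : Function.Bijective (psiFun ι x) := by
  constructor
  · intro cc d he
    obtain ⟨c₀, -, hu⟩ := h.repr_unique (psiFun ι x cc)
    rw [hu cc rfl, hu d (show psiFun ι x cc = psiFun ι x d from he)]
  · intro f
    obtain ⟨cc, hcc, -⟩ := h.repr_unique f
    exact ⟨cc, hcc.symm⟩

/-- inverse of `psiFun` -/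
def repF : A → ((Fin n → ℕ) →₀ R) := (Equiv.ofBijective _ (psiFun_bij ι x h)).symm

lemma repF_psi (cc : (Fin n → ℕ) →₀ R) : repF ι x h (psiFun ι x cc) = cc :=
  (Equiv.ofBijective _ (psiFun_bij ι x h)).symm_apply_apply cc

lemma psi_repF (a : A) : psiFun ι x (repF ι x h a) = a :=
  (Equiv.ofBijective _ (psiFun_bij ι x h)).apply_symm_apply a

lemma repF_eq_of (a : A) (cc : (Fin n → ℕ) →₀ R) (he : psiFun ι x cc = a) :
    repF ι x h a = cc := by rw [← he, repF_psi]

lemma repF_zero : repF ι x h 0 = 0 := repF_eq_of ι x h 0 0 (psiFun_zero ι x)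

lemma repF_add (a b : A) : repF ι x h (a + b) = repF ι x h a + repF ι x h b := by
  apply repF_eq_of
  rw [psiFun_add, psi_repF, psi_repF]

lemma repF_single (α : Fin n → ℕ) (r : R) :
    repF ι x h (ι r * spbwMon x α) = Finsupp.single α r :=
  repF_eq_of ι x h _ _ (psiFun_single ι x α r)

/-- all degrees in the representation of `a` are `≤ m` -/
def FdegLE (a : A) (m : ℕ) : Prop := ∀ α ∈ (repF ι x h a).support, sdeg α ≤ m

/-- all degrees in the representation of `a` are `< m` -/
def FdegLT (a : A) (m : ℕ) : Prop := ∀ α ∈ (repF ι x h a).support, sdeg α < m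

lemma FdegLE_zero (m : ℕ) : FdegLE ι x h 0 m := by
  intro α hα
  rw [repF_zero] at hα
  simp at hα

lemma FdegLT_zero (m : ℕ) : FdegLT ι x h 0 m := by
  intro α hα
  rw [repF_zero] at hα
  simp at hα

lemma FdegLT_le {a : A} {m : ℕ} (ha : FdegLT ι x h a m) : FdegLE ι x h a m :=
  fun α hα => le_of_lt (ha α hα)

lemma FdegLE_lt {a : A} {m m' : ℕ} (ha : FdegLE ι x h a m) (hm : m < m') : FdegLT ι x h a m' :=
  fun α hα => lt_of_le_of_lt (ha α hα) hm

lemma FdegLE_mono {a : A} {m m' : ℕ} (ha : FdegLE ι x h a m) (hm : m ≤ m') : FdegLE ι x h a m' :=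
  fun α hα => le_trans (ha α hα) hm

lemma FdegLT_iff_LE {a : A} {m : ℕ} : FdegLT ι x h a (m + 1) ↔ FdegLE ι x h a m := by
  constructor <;> intro ha α hα
  · exact Nat.lt_succ_iff.mp (ha α hα)
  · exact Nat.lt_succ_iff.mpr (ha α hα)

lemma eq_zero_of_FdegLT_zero {a : A} (ha : FdegLT ι x h a 0) : a = 0 := by
  have : repF ι x h a = 0 := by
    ext α
    by_contra hv
    exact absurd (ha α (Finsupp.mem_support_iff.mpr hv)) (by omega)
  calc a = psiFun ι x (repF ι x h a) := (psi_repF ι x h a).symm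
    _ = 0 := by rw [this, psiFun_zero]

lemma FdegLE_add {a b : A} {m : ℕ} (ha : FdegLE ι x h a m) (hb : FdegLE ι x h b m) :
    FdegLE ι x h (a + b) m := by
  intro α hα
  rw [repF_add] at hα
  classical
  rcases Finset.mem_union.mp (Finsupp.support_add hα) with hh | hh
  · exact ha α hh
  · exact hb α hh

lemma FdegLT_add {a b : A} {m : ℕ} (ha : FdegLT ι x h a m) (hb : FdegLT ι x h b m) :
    FdegLT ι x h (a + b) m := by
  intro α hα
  rw [repF_add] at hα
  classical
  rcases Finset.mem_union.mp (Finsupp.support_add hα) with hh | hh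
  · exact ha α hh
  · exact hb α hh

lemma FdegLE_sum {ι' : Type*} {s : Finset ι'} {g : ι' → A} {m : ℕ}
    (hg : ∀ i ∈ s, FdegLE ι x h (g i) m) : FdegLE ι x h (∑ i ∈ s, g i) m :=
  Finset.sum_induction g (fun a => FdegLE ι x h a m)
    (fun _ _ pa pb => FdegLE_add ι x h pa pb) (FdegLE_zero ι x h m) hg

lemma FdegLT_sum {ι' : Type*} {s : Finset ι'} {g : ι' → A} {m : ℕ}
    (hg : ∀ i ∈ s, FdegLT ι x h (g i) m) : FdegLT ι x h (∑ i ∈ s, g i) m :=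
  Finset.sum_induction g (fun a => FdegLT ι x h a m)
    (fun _ _ pa pb => FdegLT_add ι x h pa pb) (FdegLT_zero ι x h m) hg

lemma repF_lmul (s : R) (a : A) :
    repF ι x h (ι s * a) = Finsupp.mapRange (fun r => s * r) (by simp) (repF ι x h a) := by
  apply repF_eq_of
  have key : psiFun ι x (Finsupp.mapRange (fun r => s * r) (by simp) (repF ι x h a))
      = ι s * psiFun ι x (repF ι x h a) := by
    unfold psiFun
    rw [Finsupp.sum_mapRange_index (by intro a; simp), Finsupp.mul_sum]
    apply Finset.sum_congr rfl
    intro α _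
    simp only [map_mul, mul_assoc]
  rw [key, psi_repF]

lemma FdegLE_lmul {a : A} {m : ℕ} (s : R) (ha : FdegLE ι x h a m) :
    FdegLE ι x h (ι s * a) m := by
  intro α hα
  rw [repF_lmul] at hα
  exact ha α (Finsupp.support_mapRange hα)

lemma FdegLT_lmul {a : A} {m : ℕ} (s : R) (ha : FdegLT ι x h a m) :
    FdegLT ι x h (ι s * a) m := by
  intro α hα
  rw [repF_lmul] at hα
  exact ha α (Finsupp.support_mapRange hα)

lemma FdegLE_term (r : R) (α : Fin n → ℕ) : FdegLE ι x h (ι r * spbwMon x α) (sdeg α) := by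
  intro β hβ
  rw [repF_single] at hβ
  have := Finsupp.support_single_subset hβ
  simp at this
  subst this
  exact le_refl _

lemma FdegLE_scalar (r : R) : FdegLE ι x h (ι r) 0 := by
  have : ι r = ι r * spbwMon x (fun _ => 0) := by rw [spbwMon_zero, mul_one]
  rw [this]
  have := FdegLE_term ι x h r (fun _ => 0)
  simpa [sdeg] using this

def repHom : A →+ ((Fin n → ℕ) →₀ R) := AddMonoidHom.mk' (repF ι x h) (repF_add ι x h)

lemma repF_sub (a b : A) : repF ι x h (a - b) = repF ι x h a - repF ι x h b :=
  map_sub (repHom ι x h) a b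

lemma FdegLT_mono {a : A} {m m' : ℕ} (ha : FdegLT ι x h a m) (hm : m ≤ m') : FdegLT ι x h a m' :=
  fun α hα => lt_of_lt_of_le (ha α hα) hm

lemma FdegLE_mon (α : Fin n → ℕ) : FdegLE ι x h (spbwMon x α) (sdeg α) := by
  have : spbwMon x α = ι 1 * spbwMon x α := by rw [map_one, one_mul]
  rw [this]
  exact FdegLE_term ι x h 1 α

lemma FdegLE_decomp (a : A) :
    a = (repF ι x h a).sum fun α r => ι r * spbwMon x α := (psi_repF ι x h a).symm

end Rep

section Main

variable (ι : R →+* A) (x : Fin n → A) (h : IsSkewPBWExtension ι x)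

/-- key statement 1: moving a scalar through a monomial -/
def P1 (m : ℕ) : Prop := ∀ β : Fin n → ℕ, sdeg β ≤ m → ∃ u : R ≃+* R, ∀ r : R, ∃ b : A,
  spbwMon x β * ι r = ι (u r) * spbwMon x β + b ∧ FdegLT ι x h b (sdeg β)

/-- key statement 2: multiplying a monomial by a generator -/
def P2 (m : ℕ) : Prop := ∀ (β : Fin n → ℕ) (j : Fin n), sdeg β ≤ m → ∃ d : R, IsUnit d ∧ ∃ b : A,
  spbwMon x β * x j = ι d * spbwMon x (eadd β j) + b ∧ FdegLE ι x h b (sdeg β)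

lemma C1 {m t : ℕ} (hp : P1 ι x h m) {a : A} (ha : FdegLE ι x h a t) (htm : t ≤ m) (r : R) :
    FdegLE ι x h (a * ι r) t := by
  have heq : a * ι r = ∑ α ∈ (repF ι x h a).support,
      ι ((repF ι x h a) α) * spbwMon x α * ι r := by
    conv_lhs => rw [FdegLE_decomp ι x h a]
    rw [Finsupp.sum, Finset.sum_mul]
  rw [heq]
  apply FdegLE_sum
  intro α hα
  obtain ⟨u, hu⟩ := hp α (le_trans (ha α hα) htm)
  obtain ⟨b, hbe, hbd⟩ := hu r
  rw [mul_assoc, hbe, mul_add, ← mul_assoc, ← map_mul]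
  exact FdegLE_add ι x h (FdegLE_mono ι x h (FdegLE_term ι x h _ α) (ha α hα))
    (FdegLE_lmul ι x h _ (FdegLE_mono ι x h (FdegLT_le ι x h hbd) (ha α hα)))

lemma C2 {m t : ℕ} (hp : P2 ι x h m) {a : A} (ha : FdegLE ι x h a t) (htm : t ≤ m) (j : Fin n) :
    FdegLE ι x h (a * x j) (t + 1) := by
  have heq : a * x j = ∑ α ∈ (repF ι x h a).support,
      ι ((repF ι x h a) α) * spbwMon x α * x j := by
    conv_lhs => rw [FdegLE_decomp ι x h a]
    rw [Finsupp.sum, Finset.sum_mul]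
  rw [heq]
  apply FdegLE_sum
  intro α hα
  obtain ⟨d, -, b, hbe, hbd⟩ := hp α j (le_trans (ha α hα) htm)
  rw [mul_assoc, hbe, mul_add, ← mul_assoc, ← map_mul]
  refine FdegLE_add ι x h (FdegLE_mono ι x h (FdegLE_term ι x h _ _) ?_)
    (FdegLE_lmul ι x h _ (FdegLE_mono ι x h hbd ?_))
  · rw [sdeg_eadd]
    exact Nat.add_le_add_right (ha α hα) 1
  · exact le_trans (ha α hα) (Nat.le_succ t)

lemma CLT1 {m t : ℕ} (hp : P1 ι x h m) {a : A} (ha : FdegLT ι x h a t) (htm : t ≤ m + 1) (r : R) :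
    FdegLT ι x h (a * ι r) t := by
  cases t with
  | zero => rw [eq_zero_of_FdegLT_zero ι x h ha, zero_mul]; exact FdegLT_zero ι x h _
  | succ t' =>
    rw [FdegLT_iff_LE] at ha ⊢
    exact C1 ι x h hp ha (by omega) r

lemma CLT2 {m t : ℕ} (hp : P2 ι x h m) {a : A} (ha : FdegLT ι x h a t) (htm : t ≤ m + 1) (j : Fin n) :
    FdegLT ι x h (a * x j) (t + 1) := by
  cases t with
  | zero => rw [eq_zero_of_FdegLT_zero ι x h ha, zero_mul]; exact FdegLT_zero ι x h _
  | succ t' =>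
    rw [FdegLT_iff_LE] at ha ⊢
    exact C2 ι x h hp ha (by omega) j

variable (σ : Fin n → R ≃+* R) (c : Fin n → Fin n → R)

theorem mainP (δ' : Fin n → R → R)
    (hrel : ∀ (i : Fin n) (r : R), x i * ι r = ι (σ i r) * x i + ι (δ' i r))
    (hc : ∀ i j : Fin n, x j * x i - ι (c i j) * (x i * x j) ∈ spbwSpan ι x)
    (hcu : ∀ i j : Fin n, i < j → IsUnit (c i j)) :
    ∀ m : ℕ, P1 ι x h m ∧ P2 ι x h m := by
  intro m
  induction m using Nat.strong_induction_on with
  | _ m IH =>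
  constructor
  · -- P1
    intro β hβ
    by_cases hz : β = fun _ => 0
    · subst hz
      refine ⟨RingEquiv.refl R, fun r => ⟨0, ?_, FdegLT_zero ι x h _⟩⟩
      rw [spbwMon_zero]
      simp
    · obtain ⟨k, β', hβeq, htopraw, hdeg⟩ := exists_decomp hz true
      have htop : ∀ i, k < i → β' i = 0 := by simpa using htopraw
      have hm1 : 1 ≤ sdeg β := by omega
      have hmpos : 1 ≤ m := le_trans hm1 hβ
      have hβ' : sdeg β' ≤ m - 1 := by omega
      obtain ⟨hP1', hP2'⟩ := IH (m - 1) (by omega)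
      obtain ⟨u', hu'⟩ := hP1' β' hβ'
      refine ⟨(σ k).trans u', fun r => ?_⟩
      obtain ⟨b₁, hb₁e, hb₁d⟩ := hu' (σ k r)
      obtain ⟨b₂, hb₂e, hb₂d⟩ := hu' (δ' k r)
      have e1 : spbwMon x β = spbwMon x β' * x k := by
        rw [hβeq]; exact (spbwMon_mul_x x β' k htop).symm
      refine ⟨b₁ * x k + (ι (u' (δ' k r)) * spbwMon x β' + b₂), ?_, ?_⟩
      · calc spbwMon x β * ι r = spbwMon x β' * (x k * ι r) := by rw [e1, mul_assoc]
          _ = spbwMon x β' * ι (σ k r) * x k + spbwMon x β' * ι (δ' k r) := by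
              rw [hrel k r, mul_add, ← mul_assoc]
          _ = (ι (u' (σ k r)) * spbwMon x β' + b₁) * x k
              + (ι (u' (δ' k r)) * spbwMon x β' + b₂) := by rw [hb₁e, hb₂e]
          _ = ι (((σ k).trans u') r) * spbwMon x β
              + (b₁ * x k + (ι (u' (δ' k r)) * spbwMon x β' + b₂)) := by
              rw [add_mul, mul_assoc, ← e1, RingEquiv.coe_trans, Function.comp_apply]
              abel
      · have hb1k : FdegLT ι x h (b₁ * x k) (sdeg β) := by
          rw [hdeg]
          exact CLT2 ι x h hP2' hb₁d (by omega) k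
        have ht2 : FdegLT ι x h (ι (u' (δ' k r)) * spbwMon x β') (sdeg β) :=
          FdegLT_lmul ι x h _ (FdegLE_lt ι x h (FdegLE_mon ι x h β') (by omega))
        have ht3 : FdegLT ι x h b₂ (sdeg β) := FdegLT_mono ι x h hb₂d (by omega)
        exact FdegLT_add ι x h hb1k (FdegLT_add ι x h ht2 ht3)
  · -- P2
    intro β j hβ
    by_cases htriv : ∀ i, j < i → β i = 0
    · exact ⟨1, isUnit_one, 0,
        by rw [spbwMon_mul_x x β j htriv, map_one, one_mul, add_zero],
        FdegLE_zero ι x h _⟩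
    · push_neg at htriv
      obtain ⟨i₀, hji₀, hβi₀⟩ := htriv
      have hz : β ≠ fun _ => 0 := by
        intro hzz; rw [hzz] at hβi₀; exact hβi₀ rfl
      obtain ⟨k, β', hβeq, htopraw, hdeg⟩ := exists_decomp hz true
      have htop : ∀ i, k < i → β' i = 0 := by simpa using htopraw
      have hβzero : ∀ i, k < i → β i = 0 := by
        intro i hi
        rw [hβeq]
        have h1 : β' i = 0 := htop i hi
        have h2 : i ≠ k := ne_of_gt hi
        simp [eadd, h1, h2]
      have hjk : j < k := by
        by_contra hnot
        push_neg at hnot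
        exact hβi₀ (hβzero i₀ (lt_of_le_of_lt hnot hji₀))
      have hm1 : 1 ≤ sdeg β := by omega
      have hmpos : 1 ≤ m := le_trans hm1 hβ
      have hβ' : sdeg β' ≤ m - 1 := by omega
      obtain ⟨hP1', hP2'⟩ := IH (m - 1) (by omega)
      have e1 : spbwMon x β = spbwMon x β' * x k := by
        rw [hβeq]; exact (spbwMon_mul_x x β' k htop).symm
      obtain ⟨u', hu'⟩ := hP1' β' hβ'
      obtain ⟨b₁, hb₁e, hb₁d⟩ := hu' (c j k)
      obtain ⟨d₂, hd₂u, b₂, hb₂e, hb₂d⟩ := hP2' β' j hβ'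
      obtain ⟨r₀, cf, hspan⟩ := hc j k
      have hxkj : x k * x j = ι (c j k) * (x j * x k) + (ι r₀ + ∑ l, ι (cf l) * x l) := by
        rw [← hspan]; abel
      have hexp : eadd (eadd β' j) k = eadd β j := by
        funext i
        rw [hβeq]
        by_cases hij : i = j <;> by_cases hik : i = k <;> simp [eadd, hij, hik] <;> omega
      have htop2 : ∀ i, k < i → eadd β' j i = 0 := by
        intro i hi
        have h1 : β' i = 0 := htop i hi
        have h2 : i ≠ j := by
          intro hij; subst hij; exact absurd (lt_trans hjk hi) (lt_irrefl _)
        simp [eadd, h1, h2]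
      have e2 : spbwMon x (eadd β' j) * x k = spbwMon x (eadd β j) := by
        rw [spbwMon_mul_x x (eadd β' j) k htop2, hexp]
      have hunit : IsUnit (c j k) := hcu j k hjk
      refine ⟨u' (c j k) * d₂, (hunit.map u').mul hd₂u,
        ι (u' (c j k)) * (b₂ * x k) + b₁ * (x j * x k)
          + (spbwMon x β' * ι r₀ + ∑ l, spbwMon x β' * (ι (cf l) * x l)), ?_, ?_⟩
      · calc spbwMon x β * x j = spbwMon x β' * (x k * x j) := by rw [e1, mul_assoc]
          _ = spbwMon x β' * (ι (c j k) * (x j * x k))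
              + (spbwMon x β' * ι r₀ + ∑ l, spbwMon x β' * (ι (cf l) * x l)) := by
              rw [hxkj, mul_add, mul_add, Finset.mul_sum]
          _ = (spbwMon x β' * ι (c j k)) * (x j * x k)
              + (spbwMon x β' * ι r₀ + ∑ l, spbwMon x β' * (ι (cf l) * x l)) := by
              rw [← mul_assoc]
          _ = (ι (u' (c j k)) * spbwMon x β' + b₁) * (x j * x k)
              + (spbwMon x β' * ι r₀ + ∑ l, spbwMon x β' * (ι (cf l) * x l)) := by
              rw [hb₁e]
          _ = ι (u' (c j k)) * ((spbwMon x β' * x j) * x k) + b₁ * (x j * x k)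
              + (spbwMon x β' * ι r₀ + ∑ l, spbwMon x β' * (ι (cf l) * x l)) := by
              rw [add_mul, mul_assoc (ι (u' (c j k))) (spbwMon x β') (x j * x k),
                ← mul_assoc (spbwMon x β') (x j) (x k)]
              try abel
          _ = ι (u' (c j k)) * ((ι d₂ * spbwMon x (eadd β' j) + b₂) * x k) + b₁ * (x j * x k)
              + (spbwMon x β' * ι r₀ + ∑ l, spbwMon x β' * (ι (cf l) * x l)) := by
              rw [hb₂e]
          _ = ι (u' (c j k) * d₂) * spbwMon x (eadd β j)
              + (ι (u' (c j k)) * (b₂ * x k) + b₁ * (x j * x k)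
                + (spbwMon x β' * ι r₀ + ∑ l, spbwMon x β' * (ι (cf l) * x l))) := by
              rw [add_mul, mul_assoc (ι d₂) (spbwMon x (eadd β' j)) (x k), e2, mul_add,
                map_mul, mul_assoc (ι (u' (c j k))) (ι d₂) (spbwMon x (eadd β j))]
              try abel
      · have hE1 : FdegLE ι x h (ι (u' (c j k)) * (b₂ * x k)) (sdeg β) := by
          apply FdegLE_lmul
          rw [hdeg]
          exact C2 ι x h hP2' hb₂d (by omega) k
        have hE2 : FdegLE ι x h (b₁ * (x j * x k)) (sdeg β) := by
          rw [← mul_assoc]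
          have s1 : FdegLT ι x h (b₁ * x j) (sdeg β' + 1) :=
            CLT2 ι x h hP2' hb₁d (by omega) j
          have s2 : FdegLT ι x h ((b₁ * x j) * x k) (sdeg β' + 1 + 1) :=
            CLT2 ι x h hP2' s1 (by omega) k
          rw [FdegLT_iff_LE] at s2
          rw [hdeg]
          exact s2
        have hE3 : FdegLE ι x h (spbwMon x β' * ι r₀) (sdeg β) := by
          apply FdegLE_mono ι x h (C1 ι x h hP1' (FdegLE_mon ι x h β') (by omega) r₀) (by omega)
        have hE4 : FdegLE ι x h (∑ l, spbwMon x β' * (ι (cf l) * x l)) (sdeg β) := by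
          apply FdegLE_sum
          intro l _
          rw [← mul_assoc]
          rw [hdeg]
          exact C2 ι x h hP2' (C1 ι x h hP1' (FdegLE_mon ι x h β') (by omega) (cf l)) (by omega) l
        exact FdegLE_add ι x h (FdegLE_add ι x h hE1 hE2) (FdegLE_add ι x h hE3 hE4)

/-- right-multiplication by a unit, as an additive equivalence -/
def unitMulRight (u : Rˣ) : R ≃+ R where
  toFun r := r * u
  invFun r := r * ↑u⁻¹
  left_inv r := by simp [mul_assoc]
  right_inv r := by simp [mul_assoc]
  map_add' a b := add_mul a b u

@[simp] lemma unitMulRight_apply (u : Rˣ) (r : R) : unitMulRight u r = r * u := rfl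

theorem YL (δ' : Fin n → R → R)
    (hrel : ∀ (i : Fin n) (r : R), x i * ι r = ι (σ i r) * x i + ι (δ' i r))
    (hc : ∀ i j : Fin n, x j * x i - ι (c i j) * (x i * x j) ∈ spbwSpan ι x)
    (hcu : ∀ i j : Fin n, i < j → IsUnit (c i j)) :
    ∀ (m : ℕ) (α : Fin n → ℕ), sdeg α ≤ m → ∃ e : R ≃+ R, ∀ r : R, ∃ b : A,
      srevMon x α * ι r = ι (e r) * spbwMon x α + b ∧ FdegLT ι x h b (sdeg α) := by
  intro m
  induction m using Nat.strong_induction_on with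
  | _ m IH =>
  intro α hα
  by_cases hz : α = fun _ => 0
  · subst hz
    refine ⟨AddEquiv.refl R, fun r => ⟨0, ?_, FdegLT_zero ι x h _⟩⟩
    rw [spbwMon_zero, srevMon_zero]
    simp
  · obtain ⟨l, α', hαeq, hbotraw, hdeg⟩ := exists_decomp hz false
    have hbot : ∀ i, i < l → α' i = 0 := by simpa using hbotraw
    have hm1 : 1 ≤ sdeg α := by omega
    have hmpos : 1 ≤ m := le_trans hm1 hα
    have hα' : sdeg α' ≤ m - 1 := by omega
    obtain ⟨e', he'⟩ := IH (m - 1) (by omega) α' hα'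
    obtain ⟨hP1', hP2'⟩ := mainP ι x h σ c δ' hrel hc hcu (m - 1)
    obtain ⟨d₂, hd₂u, b₃, hb₃e, hb₃d⟩ := hP2' α' l hα'
    obtain ⟨ud₂, hud₂⟩ := hd₂u
    refine ⟨((σ l).toAddEquiv.trans e').trans (unitMulRight ud₂), fun r => ?_⟩
    obtain ⟨b₁, hb₁e, hb₁d⟩ := he' (σ l r)
    obtain ⟨b₂, hb₂e, hb₂d⟩ := he' (δ' l r)
    have e1 : srevMon x α = srevMon x α' * x l := by
      rw [hαeq]; exact (srevMon_mul_x x α' l hbot).symm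
    have e2 : spbwMon x (eadd α' l) = spbwMon x α := by rw [← hαeq]
    refine ⟨ι (e' (σ l r)) * b₃ + b₁ * x l + (ι (e' (δ' l r)) * spbwMon x α' + b₂), ?_, ?_⟩
    · have hcoef : (((σ l).toAddEquiv.trans e').trans (unitMulRight ud₂)) r
          = e' (σ l r) * d₂ := by
        simp [AddEquiv.trans_apply, hud₂]
      rw [hcoef]
      calc srevMon x α * ι r = srevMon x α' * (x l * ι r) := by rw [e1, mul_assoc]
        _ = srevMon x α' * ι (σ l r) * x l + srevMon x α' * ι (δ' l r) := by
            rw [hrel l r, mul_add, ← mul_assoc]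
        _ = (ι (e' (σ l r)) * spbwMon x α' + b₁) * x l
            + (ι (e' (δ' l r)) * spbwMon x α' + b₂) := by rw [hb₁e, hb₂e]
        _ = ι (e' (σ l r)) * (spbwMon x α' * x l) + b₁ * x l
            + (ι (e' (δ' l r)) * spbwMon x α' + b₂) := by
            rw [add_mul, mul_assoc]
        _ = ι (e' (σ l r)) * (ι d₂ * spbwMon x (eadd α' l) + b₃) + b₁ * x l
            + (ι (e' (δ' l r)) * spbwMon x α' + b₂) := by rw [hb₃e]
        _ = ι (e' (σ l r) * d₂) * spbwMon x α
            + (ι (e' (σ l r)) * b₃ + b₁ * x l + (ι (e' (δ' l r)) * spbwMon x α' + b₂)) := by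
            rw [mul_add, map_mul, ← mul_assoc (ι (e' (σ l r))) (ι d₂) (spbwMon x (eadd α' l)), e2]
            abel
    · have t1 : FdegLT ι x h (ι (e' (σ l r)) * b₃) (sdeg α) := by
        apply FdegLT_lmul
        rw [hdeg]
        exact FdegLE_lt ι x h hb₃d (by omega)
      have t2 : FdegLT ι x h (b₁ * x l) (sdeg α) := by
        rw [hdeg]
        exact CLT2 ι x h hP2' hb₁d (by omega) l
      have t3 : FdegLT ι x h (ι (e' (δ' l r)) * spbwMon x α') (sdeg α) :=
        FdegLT_lmul ι x h _ (FdegLE_lt ι x h (FdegLE_mon ι x h α') (by omega))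
      have t4 : FdegLT ι x h b₂ (sdeg α) := FdegLT_mono ι x h hb₂d (by omega)
      exact FdegLT_add ι x h (FdegLT_add ι x h t1 t2) (FdegLT_add ι x h t3 t4)

end Main

section Theta

variable (ι : R →+* A) (x : Fin n → A) (h : IsSkewPBWExtension ι x)

/-- the right-representation map -/
def thetaHom : ((Fin n → ℕ) →₀ R) →+ A :=
  AddMonoidHom.mk' (fun cc => cc.sum fun α r => srevMon x α * ι r)
    (fun cc d => Finsupp.sum_add_index' (by simp) (by intro a b₁ b₂; rw [map_add, mul_add]))

lemma thetaHom_single (α : Fin n → ℕ) (r : R) :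
    thetaHom ι x (Finsupp.single α r) = srevMon x α * ι r := by
  show (Finsupp.single α r).sum (fun α r => srevMon x α * ι r) = _
  exact Finsupp.sum_single_index (by simp)

lemma thetaHom_apply (cc : (Fin n → ℕ) →₀ R) :
    thetaHom ι x cc = ∑ α ∈ cc.support, srevMon x α * ι (cc α) := rfl

variable (e : (Fin n → ℕ) → R ≃+ R) (b : (Fin n → ℕ) → R → A)
variable (hb : ∀ α r, srevMon x α * ι r = ι (e α r) * spbwMon x α + b α r)
variable (hbd : ∀ α r, FdegLT ι x h (b α r) (sdeg α))

include hb hbd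

lemma eval_top (cc : (Fin n → ℕ) →₀ R) (γ : Fin n → ℕ)
    (hγ : ∀ α ∈ cc.support, sdeg α ≤ sdeg γ) :
    repF ι x h (thetaHom ι x cc) γ = e γ (cc γ) := by
  classical
  rw [thetaHom_apply]
  show (repHom ι x h (∑ α ∈ cc.support, srevMon x α * ι (cc α))) γ = _
  rw [map_sum (repHom ι x h), Finsupp.finset_sum_apply]
  have hterm : ∀ α ∈ cc.support,
      (repHom ι x h (srevMon x α * ι (cc α))) γ = if α = γ then e α (cc α) else 0 := by
    intro α hα
    have : repHom ι x h (srevMon x α * ι (cc α))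
        = Finsupp.single α (e α (cc α)) + repF ι x h (b α (cc α)) := by
      show repF ι x h _ = _
      rw [hb α (cc α), repF_add, repF_single]
    rw [this, Finsupp.add_apply, Finsupp.single_apply]
    have hbz : repF ι x h (b α (cc α)) γ = 0 := by
      rw [← Finsupp.notMem_support_iff]
      intro hmem
      have := hbd α (cc α) γ hmem
      have := hγ α hα
      omega
    rw [hbz, add_zero]
  rw [Finset.sum_congr rfl hterm, Finset.sum_ite_eq' cc.support γ (fun α => e α (cc α))]
  by_cases hmem : γ ∈ cc.support
  · rw [if_pos hmem]
  · rw [if_neg hmem, Finsupp.notMem_support_iff.mp hmem, map_zero]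

lemma theta_inj_aux : ∀ (M : ℕ) (cc : (Fin n → ℕ) →₀ R),
    (∀ α ∈ cc.support, sdeg α < M) → thetaHom ι x cc = 0 → cc = 0 := by
  intro M
  induction M with
  | zero =>
    intro cc hd _
    have : cc.support = ∅ :=
      Finset.eq_empty_of_forall_notMem (fun α hα => absurd (hd α hα) (by omega))
    exact Finsupp.support_eq_empty.mp this
  | succ M IHM =>
    intro cc hd h0
    have hM : ∀ γ, sdeg γ = M → cc γ = 0 := by
      intro γ hγ
      have hev := eval_top ι x h e b hb hbd cc γ
        (fun α hα => by have := hd α hα; omega)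
      rw [h0, repF_zero] at hev
      apply (e γ).injective
      rw [map_zero, ← hev]
      simp
    apply IHM cc ?_ h0
    intro α hα
    have h1 := hd α hα
    have h2 : cc α ≠ 0 := Finsupp.mem_support_iff.mp hα
    have h3 : sdeg α ≠ M := fun he => h2 (hM α he)
    omega

lemma theta_surj_aux : ∀ (M : ℕ) (a : A), FdegLT ι x h a M →
    ∃ cc : (Fin n → ℕ) →₀ R, thetaHom ι x cc = a := by
  intro M
  induction M with
  | zero =>
    intro a ha
    exact ⟨0, by rw [map_zero, eq_zero_of_FdegLT_zero ι x h ha]⟩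
  | succ M IHM =>
    intro a ha
    classical
    set S := (repF ι x h a).support.filter (fun α => sdeg α = M) with hS
    set cc₀ : (Fin n → ℕ) →₀ R :=
      ∑ α ∈ S, Finsupp.single α ((e α).symm ((repF ι x h a) α)) with hcc₀
    have hsupp : ∀ γ, cc₀ γ ≠ 0 → sdeg γ = M := by
      intro γ hγ
      by_contra hne
      apply hγ
      rw [hcc₀, Finsupp.finset_sum_apply]
      apply Finset.sum_eq_zero
      intro α hα
      rw [Finsupp.single_apply]
      have hne2 : α ≠ γ := fun he => hne (he ▸ (Finset.mem_filter.mp hα).2)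
      rw [if_neg hne2]
    have happ : ∀ γ, sdeg γ = M →
        cc₀ γ = if γ ∈ (repF ι x h a).support then (e γ).symm ((repF ι x h a) γ) else 0 := by
      intro γ hγ
      rw [hcc₀, Finsupp.finset_sum_apply]
      rw [Finset.sum_congr rfl (fun α (_ : α ∈ S) => Finsupp.single_apply),
        Finset.sum_ite_eq' S γ (fun α => (e α).symm ((repF ι x h a) α))]
      have : γ ∈ S ↔ γ ∈ (repF ι x h a).support := by
        rw [hS, Finset.mem_filter]
        exact ⟨fun hh => hh.1, fun hh => ⟨hh, hγ⟩⟩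
      by_cases hmem : γ ∈ (repF ι x h a).support
      · rw [if_pos (this.mpr hmem), if_pos hmem]
      · rw [if_neg (fun hh => hmem (this.mp hh)), if_neg hmem]
    have haLE : FdegLE ι x h a M := (FdegLT_iff_LE ι x h).mp ha
    have hres : FdegLT ι x h (a - thetaHom ι x cc₀) M := by
      intro γ hγmem
      by_contra hlt
      push_neg at hlt
      refine absurd ?_ (Finsupp.mem_support_iff.mp hγmem)
      have hevalθ : repF ι x h (thetaHom ι x cc₀) γ = e γ (cc₀ γ) :=
        eval_top ι x h e b hb hbd cc₀ γ
          (fun α hα => by have := hsupp α (Finsupp.mem_support_iff.mp hα); omega)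
      rw [repF_sub, Finsupp.sub_apply, hevalθ]
      rcases Nat.lt_or_ge M (sdeg γ) with hgt | hge2
      · have h1 : cc₀ γ = 0 := by
          by_contra hne
          have := hsupp γ hne
          omega
        have h2 : (repF ι x h a) γ = 0 := by
          by_contra hne
          have := haLE γ (Finsupp.mem_support_iff.mpr hne)
          omega
        rw [h1, h2, map_zero, sub_zero]
      · have hem : sdeg γ = M := by omega
        rw [happ γ hem]
        by_cases hmem : γ ∈ (repF ι x h a).support
        · rw [if_pos hmem, (e γ).apply_symm_apply, sub_self]
        · rw [if_neg hmem, map_zero, Finsupp.notMem_support_iff.mp hmem, sub_zero]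
    obtain ⟨cc₁, hcc₁⟩ := IHM (a - thetaHom ι x cc₀) hres
    refine ⟨cc₀ + cc₁, ?_⟩
    rw [map_add, hcc₁]
    abel

lemma theta_exists_unique (a : A) : ∃! cc : (Fin n → ℕ) →₀ R, thetaHom ι x cc = a := by
  classical
  obtain ⟨cc, hcc⟩ := theta_surj_aux ι x h e b hb hbd
    (((repF ι x h a).support.sup sdeg) + 1) a
    (fun α hα => Nat.lt_succ_of_le (Finset.le_sup hα))
  refine ⟨cc, hcc, ?_⟩
  intro cc' hcc'
  have h0 : thetaHom ι x (cc' - cc) = 0 := by rw [map_sub, hcc, hcc', sub_self]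
  have := theta_inj_aux ι x h e b hb hbd
    (((cc'.support ∪ cc.support).sup sdeg) + 1) (cc' - cc)
    (fun α hα => Nat.lt_succ_of_le (Finset.le_sup (Finsupp.support_sub hα))) h0
  exact sub_eq_zero.mp this

end Theta
end SPBW


open SPBW

/-- If `A` is a bijective skew PBW extension over `R` with
generators `x₁,…,xₙ`, then the opposite ring `Aᵐᵒᵖ` is a free left
`Rᵐᵒᵖ`-module (equivalently, `A` is a free right `R`-module) with basis the
reversed monomials `{xₙ^{αₙ} ⋯ x₁^{α₁} : α ∈ ℕⁿ}`: every element of `Aᵐᵒᵖ` has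
a unique representation as a left `Rᵐᵒᵖ`-combination of the monomials
`op(x₁)^{α₁} ⋯ op(xₙ)^{αₙ} = op(xₙ^{αₙ} ⋯ x₁^{α₁})`. -/
theorem op_free_basis {R A : Type*} [Ring R] [Ring A] {n : ℕ}
    (ι : R →+* A) (x : Fin n → A) (h : IsSkewPBWExtension ι x)
    (σ : Fin n → R ≃+* R) (δ : Fin n → R → R)
    (hδ : ∀ i, IsSigmaDerivation (σ i) (δ i))
    (hrel : ∀ (i : Fin n) (r : R), x i * ι r = ι (σ i r) * x i + ι (δ i r))
    (c : Fin n → Fin n → R)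
    (hc : ∀ i j : Fin n, x j * x i - ι (c i j) * (x i * x j) ∈ spbwSpan ι x)
    (hcu : ∀ i j : Fin n, i < j → IsUnit (c i j)) :
    ∀ f : Aᵐᵒᵖ, ∃! cc : (Fin n → ℕ) →₀ Rᵐᵒᵖ,
      f = cc.sum fun α r => RingHom.op ι r * spbwMon (fun i => op (x i)) α := by
  classical
  have hYL : ∀ α : Fin n → ℕ, ∃ e : R ≃+ R, ∀ r : R, ∃ bb : A,
      srevMon x α * ι r = ι (e r) * spbwMon x α + bb ∧ FdegLT ι x h bb (sdeg α) :=
    fun α => YL ι x h σ c δ hrel hc hcu (sdeg α) α le_rfl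
  choose e he using hYL
  choose b hb hbd using he
  -- key conversion lemma
  have key : ∀ cc : (Fin n → ℕ) →₀ Rᵐᵒᵖ,
      (cc.sum fun α r => RingHom.op ι r * spbwMon (fun i => op (x i)) α)
        = op (thetaHom ι x (Finsupp.mapRange unop unop_zero cc)) := by
    intro cc
    have h1 : thetaHom ι x (Finsupp.mapRange unop unop_zero cc)
        = cc.sum fun α r => srevMon x α * ι (unop r) := by
      show (Finsupp.mapRange unop unop_zero cc).sum (fun α r => srevMon x α * ι r) = _
      rw [Finsupp.sum_mapRange_index (by intro a; simp)]
    have h2 : op (∑ a ∈ cc.support, srevMon x a * ι (unop (cc a)))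
        = ∑ a ∈ cc.support, op (srevMon x a * ι (unop (cc a))) :=
      map_sum (opAddEquiv (α := A)).toAddMonoidHom _ _
    rw [h1, Finsupp.sum, Finsupp.sum, h2]
    apply Finset.sum_congr rfl
    intro α _
    show _ = op (srevMon x α * ι (unop (cc α)))
    rw [op_mul, op_srevMon]
    rfl
  intro f
  obtain ⟨cc₀, hcc₀, huniq⟩ := theta_exists_unique ι x h e b hb hbd (unop f)
  refine ⟨Finsupp.mapRange op rfl cc₀, ?_, ?_⟩
  · beta_reduce
    rw [key]
    have : Finsupp.mapRange unop unop_zero (Finsupp.mapRange op rfl cc₀) = cc₀ := by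
      ext γ
      rw [Finsupp.mapRange_apply, Finsupp.mapRange_apply, unop_op]
    rw [this, hcc₀, op_unop]
  · intro cc' hcc'
    beta_reduce at hcc'
    have h2 : thetaHom ι x (Finsupp.mapRange unop unop_zero cc') = unop f := by
      have := hcc'
      rw [key] at this
      rw [← unop_op (thetaHom ι x (Finsupp.mapRange unop unop_zero cc')), ← this]
    have h3 := huniq _ h2
    ext γ
    rw [Finsupp.mapRange_apply, ← h3, Finsupp.mapRange_apply, op_unop]
end
end

section
/- Let A be a skew PBW extension over R with generators x_1,…,x_n and constants c_{i,j} ∈ R satisfying x_j x_i − c_{i,j} x_i x_j ∈ R + Rx_1 + ··· + Rx_n. Then for all 1 ≤ i < j ≤ n, c_{j,i}·c_{i,j} = 1; that is, c_{i,j} has a left inverse and c_{j,i} has a right inverse in R. -/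
open scoped TensorProduct
open MulOpposite

noncomputable section

lemma listProd_one {M : Type*} [Monoid M] {n : ℕ} (g : Fin n → M)
    (h : ∀ l, g l = 1) : (List.ofFn g).prod = 1 := by
  apply List.prod_eq_one
  intro a ha
  rw [List.mem_ofFn] at ha
  obtain ⟨l, rfl⟩ := ha
  exact h l

lemma listProd_single {M : Type*} [Monoid M] : ∀ {n : ℕ} (g : Fin n → M) (i : Fin n),
    (∀ l, l ≠ i → g l = 1) → (List.ofFn g).prod = g i := by
  intro n
  induction n with
  | zero => intro g i; exact i.elim0
  | succ m ih =>
    intro g i hg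
    rw [List.ofFn_succ, List.prod_cons]
    induction i using Fin.cases with
    | zero =>
      rw [listProd_one (fun k : Fin m => g k.succ) (fun k => hg k.succ (Fin.succ_ne_zero k)),
        mul_one]
    | succ i' =>
      rw [hg 0 (Fin.succ_ne_zero i').symm, one_mul]
      exact ih (fun k => g k.succ) i' (fun k hk => hg k.succ (by simpa using hk))

lemma listProd_pair {M : Type*} [Monoid M] : ∀ {n : ℕ} (g : Fin n → M) (i j : Fin n),
    i < j → (∀ l, l ≠ i → l ≠ j → g l = 1) → (List.ofFn g).prod = g i * g j := by
  intro n
  induction n with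
  | zero => intro g i; exact i.elim0
  | succ m ih =>
    intro g i j hij hg
    rw [List.ofFn_succ, List.prod_cons]
    induction j using Fin.cases with
    | zero => exact absurd hij (by simp)
    | succ j' =>
      induction i using Fin.cases with
      | zero =>
        congr 1
        exact listProd_single (fun k => g k.succ) j'
          (fun k hk => hg k.succ (Fin.succ_ne_zero k) (by simpa using hk))
      | succ i' =>
        rw [hg 0 (Fin.succ_ne_zero i').symm (Fin.succ_ne_zero j').symm, one_mul]
        exact ih (fun k => g k.succ) i' j' (by simpa using hij)
          (fun k h1 h2 => hg k.succ (by simpa using h1) (by simpa using h2))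

lemma spbwMon_zero {A : Type*} [Ring A] {n : ℕ} (x : Fin n → A) :
    spbwMon x 0 = 1 :=
  listProd_one _ (fun l => by simp)

lemma spbwMon_single {A : Type*} [Ring A] {n : ℕ} (x : Fin n → A) (l : Fin n) :
    spbwMon x (Pi.single l 1) = x l := by
  rw [spbwMon, listProd_single _ l (fun k hk => by simp [Pi.single_eq_of_ne hk])]
  simp

lemma spbwMon_pair {A : Type*} [Ring A] {n : ℕ} (x : Fin n → A) (i j : Fin n)
    (hij : i < j) : spbwMon x (Pi.single i 1 + Pi.single j 1) = x i * x j := by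
  have hne : i ≠ j := ne_of_lt hij
  rw [spbwMon, listProd_pair _ i j hij
    (fun l h1 h2 => by simp [Pi.single_eq_of_ne h1, Pi.single_eq_of_ne h2])]
  simp [Pi.single_eq_of_ne hne, Pi.single_eq_of_ne hne.symm]

/-- Let `A` be a skew PBW extension over `R` with generators
`x₁,…,xₙ` and constants `c_{i,j}` satisfying
`xⱼxᵢ − c_{i,j}xᵢxⱼ ∈ R + Rx₁ + ⋯ + Rxₙ`. Then for all `i < j` one has
`c_{j,i}·c_{i,j} = 1`; in particular `c_{i,j}` has a left inverse and
`c_{j,i}` has a right inverse in `R`. -/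
theorem c_left_right_inverse {R A : Type*} [Ring R] [Ring A] {n : ℕ}
    (ι : R →+* A) (x : Fin n → A) (h : IsSkewPBWExtension ι x)
    (c : Fin n → Fin n → R)
    (hc : ∀ i j : Fin n, x j * x i - ι (c i j) * (x i * x j) ∈ spbwSpan ι x) :
    ∀ i j : Fin n, i < j →
      c j i * c i j = 1 ∧ (∃ u : R, u * c i j = 1) ∧ (∃ v : R, c j i * v = 1) := by
  intro i j hij
  have hne : i ≠ j := ne_of_lt hij
  obtain ⟨r₁, c₁, h₁⟩ := hc i j
  obtain ⟨r₂, c₂, h₂⟩ := hc j i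
  set d : R := c j i * c i j with hd
  -- s := x i * x j - ι d * (x i * x j)
  set s : A := x i * x j - ι d * (x i * x j) with hs
  have key : s = ι (c j i) * (x j * x i - ι (c i j) * (x i * x j))
      + (x i * x j - ι (c j i) * (x j * x i)) := by
    rw [hs, hd, map_mul]
    noncomm_ring
  have hr0 : s = ι (c j i * r₁ + r₂) + ∑ l, ι (c j i * c₁ l + c₂ l) * x l := by
    rw [key, h₁, h₂]
    simp only [map_add, map_mul, mul_add, Finset.mul_sum, add_mul, ← mul_assoc]
    rw [Finset.sum_add_distrib]
    abel
  set α0 : Fin n → ℕ := Pi.single i 1 + Pi.single j 1 with hα0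
  have hmon : spbwMon x α0 = x i * x j := spbwMon_pair x i j hij
  set F : (Fin n → ℕ) → R → A := fun α r => ι r * spbwMon x α with hF
  have hF0 : ∀ α, F α 0 = 0 := fun α => by simp [hF]
  have hFadd : ∀ α (r t : R), F α (r + t) = F α r + F α t := fun α r t => by
    simp [hF, add_mul]
  set f1 : (Fin n → ℕ) →₀ R := Finsupp.single α0 (1 - d) with hf1
  set f2 : (Fin n → ℕ) →₀ R :=
    Finsupp.single 0 (c j i * r₁ + r₂) + ∑ l, Finsupp.single (Pi.single l 1) (c j i * c₁ l + c₂ l)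
    with hf2
  have hrep1 : s = f1.sum F := by
    rw [hf1, Finsupp.sum_single_index (hF0 α0), hF]
    simp only [map_sub, map_one, sub_mul, one_mul, hmon]
    exact hs
  have hrep2 : s = f2.sum F := by
    rw [hf2, Finsupp.sum_add_index' hF0 hFadd,
      ← Finsupp.sum_finset_sum_index hF0 hFadd, Finsupp.sum_single_index (hF0 _)]
    have : ∀ l : Fin n, (Finsupp.single (Pi.single l 1 : Fin n → ℕ)
        (c j i * c₁ l + c₂ l)).sum F = ι (c j i * c₁ l + c₂ l) * x l := fun l => by
      rw [Finsupp.sum_single_index (hF0 _), hF]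
      simp [spbwMon_single]
    rw [Finset.sum_congr rfl (fun l _ => this l), hF]
    simp only [spbwMon_zero, mul_one]
    exact hr0
  obtain ⟨c0, -, huniq⟩ := h.repr_unique s
  have heq : f1 = f2 := (huniq f1 hrep1).trans (huniq f2 hrep2).symm
  have hα0i : α0 i = 1 := by simp [hα0, Pi.single_eq_of_ne hne, Pi.single_eq_of_ne hne.symm]
  have hα0j : α0 j = 1 := by simp [hα0, Pi.single_eq_of_ne hne, Pi.single_eq_of_ne hne.symm]
  have hzero : (0 : Fin n → ℕ) ≠ α0 := fun hh => by
    have := congrFun hh i; rw [hα0i] at this; simp at this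
  have hsing : ∀ l : Fin n, (Pi.single l 1 : Fin n → ℕ) ≠ α0 := by
    intro l hh
    by_cases hl : l = i
    · subst hl
      have := congrFun hh j
      rw [hα0j, Pi.single_eq_of_ne hne.symm] at this
      simp at this
    · have := congrFun hh i
      rw [hα0i, Pi.single_eq_of_ne (Ne.symm hl)] at this
      simp at this
  have hval : (1 : R) - d = 0 := by
    have h1 : f1 α0 = 1 - d := by simp [hf1]
    have h2 : f2 α0 = 0 := by
      rw [hf2]
      simp only [Finsupp.add_apply, Finsupp.finset_sum_apply]
      rw [Finsupp.single_eq_of_ne' hzero]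
      rw [Finset.sum_eq_zero (fun l _ => Finsupp.single_eq_of_ne' (hsing l))]
      simp
    rw [heq, h2] at h1
    exact h1.symm
  have hd1 : d = 1 := by
    have := sub_eq_zero.mp hval
    exact this.symm
  exact ⟨hd1, ⟨c j i, hd1⟩, ⟨c i j, hd1⟩⟩
end
end

section
/- Let A be a skew PBW extension over R with generators x_1,…,x_n and endomorphisms σ_1,…,σ_n. For each monomial x^α = x_1^{α_1}···x_n^{α_n} and every nonzero r ∈ R, there exist unique elements r_α := σ^α(r) = σ_1^{α_1}(···(σ_n^{α_n}(r))) ∈ R, nonzero, and p_{α,r} ∈ A such that x^α·r = r_α·x^α + p_{α,r}, where p_{α,r} = 0 or deg(p_{α,r}) < |α| = α_1 + ··· + α_n; and if r is left invertible in R, then so is r_α. -/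
open scoped TensorProduct
open MulOpposite

noncomputable section

/-- The set of elements of `A` which are (possibly empty) left
`R`-combinations of standard monomials of total degree `< d`; an element lies
here iff it is `0` or has degree `< d`. -/
def spbwDegLT {R A : Type*} [Ring R] [Ring A] {n : ℕ} (ι : R →+* A)
    (x : Fin n → A) (d : ℕ) : Set A :=
  {a : A | ∃ c : (Fin n → ℕ) →₀ R, (∀ β ∈ c.support, ∑ i, β i < d) ∧
    a = c.sum fun β r => ι r * spbwMon x β}

/-- `σ^α = σ₁^{α₁} ∘ σ₂^{α₂} ∘ ⋯ ∘ σₙ^{αₙ}` as a function `R → R`. -/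
def sigmaPow {R : Type*} [Ring R] {n : ℕ} (σ : Fin n → R →+* R)
    (α : Fin n → ℕ) : R → R :=
  (List.ofFn fun i => (⇑(σ i))^[α i]).foldr (· ∘ ·) id


set_option linter.unusedSectionVars false

namespace SpbwAux

variable {R A : Type*} [Ring R] [Ring A] {n : ℕ}

/-- ordered monomial over a list of indices -/
def monL (x : Fin n → A) (γ : Fin n → ℕ) (L : List (Fin n)) : A :=
  (L.map fun l => x l ^ γ l).prod

lemma monL_nil (x : Fin n → A) (γ : Fin n → ℕ) : monL x γ [] = 1 := rfl

lemma monL_cons (x : Fin n → A) (γ : Fin n → ℕ) (i : Fin n) (L : List (Fin n)) :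
    monL x γ (i :: L) = x i ^ γ i * monL x γ L := by
  simp [monL]

lemma monL_congr (x : Fin n → A) {γ γ' : Fin n → ℕ} (L : List (Fin n))
    (h : ∀ l ∈ L, γ l = γ' l) : monL x γ L = monL x γ' L := by
  induction L with
  | nil => rfl
  | cons i L ih =>
      rw [monL_cons, monL_cons, h i ((List.mem_cons_self : i ∈ i :: L)),
        ih fun l hl => h l (List.mem_cons_of_mem _ hl)]

lemma sum_update {γ : Fin n → ℕ} {i : Fin n} (hγ : γ i = 0) (j : ℕ) :
    ∑ l, Function.update γ i j l = j + ∑ l, γ l := by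
  rw [Finset.sum_update_of_mem (Finset.mem_univ i)]
  congr 1
  rw [Finset.sum_eq_add_sum_sdiff_singleton_of_mem (Finset.mem_univ i), hγ, zero_add]

lemma sum_split (β : Fin n → ℕ) (i : Fin n) :
    ∑ l, β l = β i + ∑ l, Function.update β i 0 l := by
  have h := sum_update (γ := Function.update β i 0) (i := i)
    (Function.update_self i 0 β) (β i)
  rwa [Function.update_idem, Function.update_eq_self] at h

lemma monL_sublist (x : Fin n → A) {γ : Fin n → ℕ} {L M : List (Fin n)}
    (hM : M.Nodup) (hLM : L.Sublist M) (hγ : ∀ l, l ∉ L → γ l = 0) :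
    monL x γ M = monL x γ L := by
  induction hLM generalizing γ with
  | slnil => rfl
  | @cons L M a hsub ih =>
      obtain ⟨ha, hM'⟩ := List.nodup_cons.mp hM
      have haL : a ∉ L := fun hc => ha (hsub.subset hc)
      rw [monL_cons, hγ a haL, pow_zero, one_mul, ih hM' hγ]
  | @cons_cons L M a hsub ih =>
      obtain ⟨ha, hM'⟩ := List.nodup_cons.mp hM
      have haL : a ∉ L := fun hc => ha (hsub.subset hc)
      set γ' := Function.update γ a 0 with hγ'def
      have hMeq : monL x γ M = monL x γ' M := by
        refine monL_congr x M fun l hl => ?_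
        have hla : l ≠ a := by rintro rfl; exact ha hl
        rw [hγ'def, Function.update_of_ne hla]
      have hLeq : monL x γ' L = monL x γ L := by
        refine monL_congr x L fun l hl => ?_
        have hla : l ≠ a := by rintro rfl; exact haL hl
        rw [hγ'def, Function.update_of_ne hla]
      have hγ'supp : ∀ l, l ∉ L → γ' l = 0 := by
        intro l hl
        by_cases hla : l = a
        · rw [hla, hγ'def, Function.update_self]
        · rw [hγ'def, Function.update_of_ne hla]
          exact hγ l (by simp [hla, hl])
      rw [monL_cons, monL_cons, hMeq, ih hM' hγ'supp, hLeq]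

/-- combinations of `ι c * x i ^ j` with `j < k`. -/
def powLow (ι : R →+* A) (x : Fin n → A) (i : Fin n) (k : ℕ) : AddSubmonoid A :=
  AddSubmonoid.closure {a | ∃ (c : R) (j : ℕ), j < k ∧ a = ι c * x i ^ j}

/-- combinations of `ι c * monL x γ L` with `γ` supported on `L` and `∑ γ < d`. -/
def goodL (ι : R →+* A) (x : Fin n → A) (L : List (Fin n)) (d : ℕ) : AddSubmonoid A :=
  AddSubmonoid.closure
    {a | ∃ (c : R) (γ : Fin n → ℕ), (∀ l, l ∉ L → γ l = 0) ∧ (∑ j, γ j) < d ∧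
      a = ι c * monL x γ L}

lemma goodL_mono (ι : R →+* A) (x : Fin n → A) (L : List (Fin n)) {d d' : ℕ} (h : d ≤ d') :
    goodL ι x L d ≤ goodL ι x L d' := by
  refine AddSubmonoid.closure_mono ?_
  rintro a ⟨c, γ, h1, h2, rfl⟩
  exact ⟨c, γ, h1, h2.trans_le h, rfl⟩

lemma mul_powLow {ι : R →+* A} {x : Fin n → A} {σ : Fin n → R →+* R} {δ : Fin n → R → R}
    (hrel : ∀ (i : Fin n) (r : R), x i * ι r = ι (σ i r) * x i + ι (δ i r))
    {i : Fin n} {k : ℕ} {e : A} (he : e ∈ powLow ι x i k) :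
    x i * e ∈ powLow ι x i (k + 1) := by
  induction he using AddSubmonoid.closure_induction with
  | mem a ha =>
      obtain ⟨c, j, hj, rfl⟩ := ha
      have : x i * (ι c * x i ^ j) = ι (σ i c) * x i ^ (j + 1) + ι (δ i c) * x i ^ j := by
        rw [← mul_assoc, hrel, add_mul, mul_assoc, ← pow_succ']
      rw [this]
      exact add_mem (AddSubmonoid.subset_closure ⟨σ i c, j + 1, Nat.succ_lt_succ hj, rfl⟩)
        (AddSubmonoid.subset_closure ⟨δ i c, j, hj.trans (Nat.lt_succ_self k), rfl⟩)
  | zero => rw [mul_zero]; exact zero_mem _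
  | add a b _ _ iha ihb => rw [mul_add]; exact add_mem iha ihb

lemma xpow_mul_coeff {ι : R →+* A} {x : Fin n → A} {σ : Fin n → R →+* R} {δ : Fin n → R → R}
    (hrel : ∀ (i : Fin n) (r : R), x i * ι r = ι (σ i r) * x i + ι (δ i r)) (i : Fin n) :
    ∀ (k : ℕ) (c : R), ∃ e ∈ powLow ι x i k, x i ^ k * ι c = ι ((σ i ^ k) c) * x i ^ k + e
  | 0, c => ⟨0, zero_mem _, by simp⟩
  | k + 1, c => by
      obtain ⟨e, he, heq⟩ := xpow_mul_coeff hrel i k c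
      refine ⟨ι (δ i ((σ i ^ k) c)) * x i ^ k + x i * e, add_mem
        (AddSubmonoid.subset_closure ⟨δ i ((σ i ^ k) c), k, Nat.lt_succ_self k, rfl⟩)
        (mul_powLow hrel he), ?_⟩
      have h1 : x i ^ (k + 1) * ι c = x i * (x i ^ k * ι c) := by
        rw [pow_succ', mul_assoc]
      rw [h1, heq, mul_add, ← mul_assoc, hrel, add_mul, mul_assoc, ← pow_succ']
      have h2 : (σ i ^ (k + 1)) c = σ i ((σ i ^ k) c) := by
        rw [pow_succ']; rfl
      rw [h2]
      ring_nf
      abel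

lemma powLow_mul_monL {ι : R →+* A} {x : Fin n → A}
    {i : Fin n} {k : ℕ} {L : List (Fin n)} {γ : Fin n → ℕ}
    (hiL : i ∉ L) (hγ : ∀ l, l ∉ L → γ l = 0) {e : A} (he : e ∈ powLow ι x i k) :
    e * monL x γ L ∈ goodL ι x (i :: L) (k + ∑ j, γ j) := by
  have hγi : γ i = 0 := hγ i hiL
  induction he using AddSubmonoid.closure_induction with
  | mem a ha =>
      obtain ⟨c, j, hj, rfl⟩ := ha
      have hmon : monL x (Function.update γ i j) (i :: L) = x i ^ j * monL x γ L := by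
        rw [monL_cons, Function.update_self]
        congr 1
        refine monL_congr x L fun l hl => ?_
        have hla : l ≠ i := by rintro rfl; exact hiL hl
        rw [Function.update_of_ne hla]
      have : ι c * x i ^ j * monL x γ L = ι c * monL x (Function.update γ i j) (i :: L) := by
        rw [hmon, mul_assoc]
      rw [this]
      refine AddSubmonoid.subset_closure ⟨c, Function.update γ i j, ?_, ?_, rfl⟩
      · intro l hl
        have hla : l ≠ i := fun hc => hl (hc ▸ (List.mem_cons_self : i ∈ i :: L))
        rw [Function.update_of_ne hla]
        exact hγ l fun hc => hl (List.mem_cons_of_mem _ hc)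
      · rw [sum_update hγi]
        exact Nat.add_lt_add_right hj _
  | zero => rw [zero_mul]; exact zero_mem _
  | add a b _ _ iha ihb => rw [add_mul]; exact add_mem iha ihb

lemma xpow_mul_goodL {ι : R →+* A} {x : Fin n → A} {σ : Fin n → R →+* R} {δ : Fin n → R → R}
    (hrel : ∀ (i : Fin n) (r : R), x i * ι r = ι (σ i r) * x i + ι (δ i r))
    {i : Fin n} {L : List (Fin n)} {d k : ℕ} {a : A}
    (hiL : i ∉ L) (ha : a ∈ goodL ι x L d) :
    x i ^ k * a ∈ goodL ι x (i :: L) (k + d) := by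
  induction ha using AddSubmonoid.closure_induction with
  | mem a ha =>
      obtain ⟨c, γ, hγ, hdeg, rfl⟩ := ha
      obtain ⟨e, he, heq⟩ := xpow_mul_coeff hrel i k c
      have hγi : γ i = 0 := hγ i hiL
      have hmon : monL x (Function.update γ i k) (i :: L) = x i ^ k * monL x γ L := by
        rw [monL_cons, Function.update_self]
        congr 1
        refine monL_congr x L fun l hl => ?_
        have hla : l ≠ i := by rintro rfl; exact hiL hl
        rw [Function.update_of_ne hla]
      have key : x i ^ k * (ι c * monL x γ L) =
          ι ((σ i ^ k) c) * monL x (Function.update γ i k) (i :: L) + e * monL x γ L := by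
        rw [hmon, ← mul_assoc, heq, add_mul, mul_assoc]
      rw [key]
      refine add_mem (AddSubmonoid.subset_closure
        ⟨(σ i ^ k) c, Function.update γ i k, ?_, ?_, rfl⟩) ?_
      · intro l hl
        have hla : l ≠ i := fun hc => hl (hc ▸ (List.mem_cons_self : i ∈ i :: L))
        rw [Function.update_of_ne hla]
        exact hγ l fun hc => hl (List.mem_cons_of_mem _ hc)
      · rw [sum_update hγi]
        exact Nat.add_lt_add_left hdeg _
      · exact goodL_mono ι x (i :: L) (Nat.add_le_add_left hdeg.le _)
          (powLow_mul_monL hiL hγ he)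
  | zero => rw [mul_zero]; exact zero_mem _
  | add a b _ _ iha ihb => rw [mul_add]; exact add_mem iha ihb

/-- the composite endomorphism `σ^β` over the indices in `L`. -/
def SgH (σ : Fin n → R →+* R) (β : Fin n → ℕ) (L : List (Fin n)) : R →+* R :=
  L.foldr (fun i acc => (σ i ^ β i).comp acc) (RingHom.id R)

lemma SgH_congr (σ : Fin n → R →+* R) {β β' : Fin n → ℕ} (L : List (Fin n))
    (h : ∀ l ∈ L, β l = β' l) : SgH σ β L = SgH σ β' L := by
  induction L with
  | nil => rfl
  | cons i L ih =>
      show (σ i ^ β i).comp (SgH σ β L) = (σ i ^ β' i).comp (SgH σ β' L)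
      rw [h i ((List.mem_cons_self : i ∈ i :: L)), ih fun l hl => h l (List.mem_cons_of_mem _ hl)]

lemma SgH_injective {σ : Fin n → R →+* R} (hσ : ∀ i, Function.Injective (σ i))
    (β : Fin n → ℕ) (L : List (Fin n)) : Function.Injective (SgH σ β L) := by
  induction L with
  | nil => exact fun a b hab => hab
  | cons i L ih =>
      show Function.Injective ((σ i ^ β i).comp (SgH σ β L))
      rw [RingHom.coe_comp]
      refine Function.Injective.comp ?_ ih
      rw [RingHom.coe_pow]
      exact (hσ i).iterate _

lemma master {ι : R →+* A} {x : Fin n → A} {σ : Fin n → R →+* R} {δ : Fin n → R → R}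
    (hrel : ∀ (i : Fin n) (r : R), x i * ι r = ι (σ i r) * x i + ι (δ i r)) :
    ∀ (L : List (Fin n)), L.Nodup → ∀ β : Fin n → ℕ,
    (∀ l, l ∉ L → β l = 0) → ∀ r : R,
    ∃ p ∈ goodL ι x L (∑ j, β j),
      monL x β L * ι r = ι (SgH σ β L r) * monL x β L + p := by
  intro L
  induction L with
  | nil =>
      intro _ β hβ r
      refine ⟨0, zero_mem _, ?_⟩
      simp [monL_nil, SgH]
  | cons i L' ih =>
      intro hnd β hβ r
      obtain ⟨hiL, hnd'⟩ := List.nodup_cons.mp hnd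
      set β' := Function.update β i 0 with hβ'def
      have hβ' : ∀ l, l ∉ L' → β' l = 0 := by
        intro l hl
        by_cases hla : l = i
        · rw [hla, hβ'def, Function.update_self]
        · rw [hβ'def, Function.update_of_ne hla]
          exact hβ l (by simp [hla, hl])
      obtain ⟨p', hp', heq'⟩ := ih hnd' β' hβ' r
      set s := SgH σ β' L' r with hsdef
      obtain ⟨e, he, heqe⟩ := xpow_mul_coeff hrel i (β i) s
      have hmon' : monL x β' L' = monL x β L' := by
        refine monL_congr x L' fun l hl => ?_
        have hla : l ≠ i := by rintro rfl; exact hiL hl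
        rw [hβ'def, Function.update_of_ne hla]
      have hcongr : SgH σ β L' = SgH σ β' L' :=
        SgH_congr (β := β) (β' := β') σ L'
          (fun l hl => (Function.update_of_ne (by rintro rfl; exact hiL hl) 0 β).symm)
      have hSg : SgH σ β (i :: L') r = (σ i ^ β i) s := by
        show (σ i ^ β i).comp (SgH σ β L') r = (σ i ^ β i) s
        rw [RingHom.comp_apply, hcongr, ← hsdef]
      have key : monL x β (i :: L') * ι r =
          ι (SgH σ β (i :: L') r) * monL x β (i :: L') +
            (e * monL x β' L' + x i ^ β i * p') := by
        rw [monL_cons, hSg, ← hmon', mul_assoc, heq', mul_add, ← mul_assoc, heqe,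
          add_mul, mul_assoc]
        abel
      refine ⟨e * monL x β' L' + x i ^ β i * p', ?_, key⟩
      have hsum : ∑ j, β j = β i + ∑ j, β' j := sum_split β i
      rw [hsum]
      exact add_mem (powLow_mul_monL hiL hβ' he) (xpow_mul_goodL hrel hiL hp')

end SpbwAux

namespace SpbwAux2

variable {R A : Type*} [Ring R] [Ring A] {n : ℕ}

open SpbwAux

lemma spbwMon_eq_monL (x : Fin n → A) (γ : Fin n → ℕ) :
    spbwMon x γ = monL x γ (List.finRange n) := by
  simp [spbwMon, monL, List.ofFn_eq_map]

lemma mem_degLT_zero (ι : R →+* A) (x : Fin n → A) (d : ℕ) :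
    (0 : A) ∈ spbwDegLT ι x d :=
  ⟨0, by simp, by simp⟩

lemma mem_degLT_single (ι : R →+* A) (x : Fin n → A) {d : ℕ} (c : R) {γ : Fin n → ℕ}
    (hd : ∑ j, γ j < d) : ι c * spbwMon x γ ∈ spbwDegLT ι x d := by
  refine ⟨Finsupp.single γ c, ?_, ?_⟩
  · intro β hβ
    have : β = γ := Finset.mem_singleton.mp (Finsupp.support_single_subset hβ)
    rwa [this]
  · rw [Finsupp.sum_single_index (by simp)]

lemma mem_degLT_add {ι : R →+* A} {x : Fin n → A} {d : ℕ} {a b : A}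
    (ha : a ∈ spbwDegLT ι x d) (hb : b ∈ spbwDegLT ι x d) :
    a + b ∈ spbwDegLT ι x d := by
  classical
  obtain ⟨c1, hc1, rfl⟩ := ha
  obtain ⟨c2, hc2, rfl⟩ := hb
  refine ⟨c1 + c2, ?_, ?_⟩
  · intro β hβ
    rcases Finset.mem_union.mp (Finsupp.support_add hβ) with h | h
    · exact hc1 β h
    · exact hc2 β h
  · rw [Finsupp.sum_add_index' (fun β => by simp) (fun β r s => by rw [map_add, add_mul])]

lemma mem_degLT_sub {ι : R →+* A} {x : Fin n → A} {d : ℕ} {a b : A}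
    (ha : a ∈ spbwDegLT ι x d) (hb : b ∈ spbwDegLT ι x d) :
    a - b ∈ spbwDegLT ι x d := by
  classical
  obtain ⟨c1, hc1, rfl⟩ := ha
  obtain ⟨c2, hc2, rfl⟩ := hb
  refine ⟨c1 - c2, ?_, ?_⟩
  · intro β hβ
    rcases Finset.mem_union.mp (Finsupp.support_sub hβ) with h | h
    · exact hc1 β h
    · exact hc2 β h
  · rw [Finsupp.sum_sub_index (fun β r s => by rw [map_sub, sub_mul])]

lemma goodL_le_degLT {ι : R →+* A} {x : Fin n → A} {L : List (Fin n)} {d : ℕ}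
    (hsub : L.Sublist (List.finRange n)) {a : A} (ha : a ∈ goodL ι x L d) :
    a ∈ spbwDegLT ι x d := by
  induction ha using AddSubmonoid.closure_induction with
  | mem a ha =>
      obtain ⟨c, γ, hγ, hdeg, rfl⟩ := ha
      have : monL x γ L = spbwMon x γ := by
        rw [spbwMon_eq_monL, monL_sublist x (List.nodup_finRange n) hsub hγ]
      rw [this]
      exact mem_degLT_single ι x c hdeg
  | zero => exact mem_degLT_zero ι x d
  | add a b _ _ iha ihb => exact mem_degLT_add iha ihb

lemma foldr_eq_SgH (σ : Fin n → R →+* R) (α : Fin n → ℕ) :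
    ∀ (L : List (Fin n)) (r : R),
      (L.map fun i => (⇑(σ i))^[α i]).foldr (· ∘ ·) id r = SgH σ α L r := by
  intro L
  induction L with
  | nil => intro r; rfl
  | cons i L ih =>
      intro r
      show ((⇑(σ i))^[α i] ∘ (L.map fun i => (⇑(σ i))^[α i]).foldr (· ∘ ·) id) r
        = ((σ i ^ α i).comp (SgH σ α L)) r
      rw [Function.comp_apply, ih r, RingHom.comp_apply, RingHom.coe_pow]

lemma sigmaPow_eq_SgH (σ : Fin n → R →+* R) (α : Fin n → ℕ) (r : R) :
    sigmaPow σ α r = SgH σ α (List.finRange n) r := by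
  rw [sigmaPow, List.ofFn_eq_map]
  exact foldr_eq_SgH σ α (List.finRange n) r

end SpbwAux2

/-- Let `A` be a skew PBW extension over `R` with generators
`x₁,…,xₙ` and endomorphisms `σ₁,…,σₙ`. For each monomial `x^α` and every
nonzero `r ∈ R`, the element `r_α := σ^α(r)` is nonzero, and there exists a
unique pair `(r_α, p_{α,r})` with `x^α·r = r_α·x^α + p_{α,r}` and `p_{α,r} = 0`
or `deg p_{α,r} < |α|`; moreover if `r` is left invertible then so is `r_α`. -/
theorem monomial_mul_coeff {R A : Type*} [Ring R] [Ring A] {n : ℕ}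
    (ι : R →+* A) (x : Fin n → A) (h : IsSkewPBWExtension ι x)
    (σ : Fin n → R →+* R) (hσ : ∀ i, Function.Injective (σ i))
    (δ : Fin n → R → R) (hδ : ∀ i, IsSigmaDerivation (σ i) (δ i))
    (hrel : ∀ (i : Fin n) (r : R), x i * ι r = ι (σ i r) * x i + ι (δ i r)) :
    ∀ (α : Fin n → ℕ) (r : R), r ≠ 0 →
      sigmaPow σ α r ≠ 0 ∧
      (∃ p : A,
        spbwMon x α * ι r = ι (sigmaPow σ α r) * spbwMon x α + p ∧
        p ∈ spbwDegLT ι x (∑ i, α i) ∧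
        ∀ (r' : R) (p' : A),
          spbwMon x α * ι r = ι r' * spbwMon x α + p' →
          p' ∈ spbwDegLT ι x (∑ i, α i) →
          r' = sigmaPow σ α r ∧ p' = p) ∧
      ((∃ u : R, u * r = 1) → ∃ u : R, u * sigmaPow σ α r = 1) := by
  classical
  intro α r hr
  have hsig : ∀ t : R, sigmaPow σ α t = SpbwAux.SgH σ α (List.finRange n) t :=
    SpbwAux2.sigmaPow_eq_SgH σ α
  have hmon : spbwMon x α = SpbwAux.monL x α (List.finRange n) :=
    SpbwAux2.spbwMon_eq_monL x α
  have hΦinj : Function.Injective (SpbwAux.SgH σ α (List.finRange n)) :=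
    SpbwAux.SgH_injective hσ α (List.finRange n)
  refine ⟨?_, ?_, ?_⟩
  · intro h0
    apply hr
    apply hΦinj
    rw [← hsig r, h0, map_zero]
  · obtain ⟨p, hp, heq⟩ := SpbwAux.master hrel (List.finRange n) (List.nodup_finRange n)
      α (fun l hl => absurd (List.mem_finRange l) hl) r
    have heqm : spbwMon x α * ι r = ι (sigmaPow σ α r) * spbwMon x α + p := by
      rw [hmon, hsig r]; exact heq
    have hpdeg : p ∈ spbwDegLT ι x (∑ i, α i) :=
      SpbwAux2.goodL_le_degLT (List.Sublist.refl _) hp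
    refine ⟨p, heqm, hpdeg, ?_⟩
    intro r' p' heq' hp'deg
    set rα := sigmaPow σ α r with hrαdef
    have h2 : ι rα * spbwMon x α + p = ι r' * spbwMon x α + p' := by
      rw [← heqm, heq']
    have h3 : ι (rα - r') * spbwMon x α = p' - p := by
      rw [map_sub, sub_mul, sub_eq_sub_iff_add_eq_add, h2, add_comm]
    have hdiff : p' - p ∈ spbwDegLT ι x (∑ i, α i) := SpbwAux2.mem_degLT_sub hp'deg hpdeg
    obtain ⟨c, hcdeg, hcval⟩ := hdiff
    obtain ⟨c0, hc0, huniq⟩ := h.repr_unique (ι (rα - r') * spbwMon x α)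
    have e1 : Finsupp.single α (rα - r') = c0 := by
      exact huniq _ (Finsupp.sum_single_index (a := α) (b := rα - r')
        (h := fun β t => ι t * spbwMon x β) (by simp)).symm
    have e2 : c = c0 := huniq _ (h3.trans hcval)
    have hrr : r' = rα := by
      by_contra hne
      have hz : rα - r' ≠ 0 := sub_ne_zero.mpr (Ne.symm hne)
      have hmem : α ∈ (Finsupp.single α (rα - r')).support := by
        rw [Finsupp.support_single_ne_zero α hz]
        exact Finset.mem_singleton_self α
      rw [e1, ← e2] at hmem
      exact absurd (hcdeg α hmem) (lt_irrefl _)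
    refine ⟨hrr, ?_⟩
    rw [hrr] at h2
    exact (add_left_cancel h2).symm
  · rintro ⟨u, hu⟩
    refine ⟨SpbwAux.SgH σ α (List.finRange n) u, ?_⟩
    rw [hsig r, ← map_mul, hu, map_one]
end
end
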